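/- arXiv:2501.02510 — 11 statements merged into one kernel-verified Lean document; each statement's English description precedes it below -/
import Mathlib

section
/- If the query set I ⊆ [n] satisfies |I| < Γ, then Ψ(I) = min_{j ∈ [n]} (c̄_j + ĉ_j). -/
open Finset

/-- The DDID value of query set `I` for the 1-selection problem with objective uncertainty. -/
noncomputable def Psi (n Γ : ℕ) (cbar chat : Fin n → ℝ) (I : Finset (Fin n)) : ℝ :=
  ⨆ γ : {γ : Fin n → Bool // (Finset.univ.filter (fun i => γ i = true)).card ≤ Γ},
    ⨅ j : Fin n,
      ⨆ δ : {δ : Fin n → Bool //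
          (Finset.univ.filter (fun i => δ i = true)).card ≤ Γ ∧ ∀ i ∈ I, δ i = γ.1 i},
        cbar j + (if δ.1 j = true then chat j else 0)

theorem stmt1 (n Γ : ℕ) (hn : 0 < n) (hΓ : 1 ≤ Γ) (cbar chat : Fin n → ℝ)
    (hchat : ∀ j, 0 ≤ chat j) (I : Finset (Fin n)) (hI : I.card < Γ) :
    Psi n Γ cbar chat I =
      Finset.univ.inf' (Finset.univ_nonempty_iff.mpr (Fin.pos_iff_nonempty.mp hn))
        (fun j => cbar j + chat j) := by
  classical
  have hne : (Finset.univ : Finset (Fin n)).Nonempty :=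
    Finset.univ_nonempty_iff.mpr (Fin.pos_iff_nonempty.mp hn)
  set M := Finset.univ.inf' hne (fun j => cbar j + chat j) with hM
  -- each δ-term is at most cbar j + chat j
  have hterm : ∀ (γ : {γ : Fin n → Bool // (Finset.univ.filter (fun i => γ i = true)).card ≤ Γ})
      (j : Fin n)
      (δ : {δ : Fin n → Bool //
        (Finset.univ.filter (fun i => δ i = true)).card ≤ Γ ∧ ∀ i ∈ I, δ i = γ.1 i}),
      cbar j + (if δ.1 j = true then chat j else 0) ≤ cbar j + chat j := by
    intro γ j δ
    by_cases h : δ.1 j = true <;> simp [h, hchat j]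
  -- the δ-type is nonempty (take δ = γ)
  have hδne : ∀ (γ : {γ : Fin n → Bool // (Finset.univ.filter (fun i => γ i = true)).card ≤ Γ}),
      Nonempty {δ : Fin n → Bool //
        (Finset.univ.filter (fun i => δ i = true)).card ≤ Γ ∧ ∀ i ∈ I, δ i = γ.1 i} :=
    fun γ => ⟨⟨γ.1, γ.2, fun _ _ => rfl⟩⟩
  -- sup over δ is ≤ cbar j + chat j
  have hsup_le : ∀ (γ : {γ : Fin n → Bool // (Finset.univ.filter (fun i => γ i = true)).card ≤ Γ}) (j : Fin n),
      (⨆ δ : {δ : Fin n → Bool //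
          (Finset.univ.filter (fun i => δ i = true)).card ≤ Γ ∧ ∀ i ∈ I, δ i = γ.1 i},
        cbar j + (if δ.1 j = true then chat j else 0)) ≤ cbar j + chat j := by
    intro γ j
    haveI := hδne γ
    exact ciSup_le (hterm γ j)
  have hbddA : ∀ (γ : {γ : Fin n → Bool // (Finset.univ.filter (fun i => γ i = true)).card ≤ Γ}) (j : Fin n), BddAbove (Set.range fun δ : {δ : Fin n → Bool //
      (Finset.univ.filter (fun i => δ i = true)).card ≤ Γ ∧ ∀ i ∈ I, δ i = γ.1 i} =>
      cbar j + (if δ.1 j = true then chat j else 0)) := by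
    intro γ j
    exact ⟨cbar j + chat j, by rintro _ ⟨δ, rfl⟩; exact hterm γ j δ⟩
  -- inner inf ≤ M for every γ
  have hfle : ∀ (γ : {γ : Fin n → Bool // (Finset.univ.filter (fun i => γ i = true)).card ≤ Γ}), (⨅ j : Fin n,
      ⨆ δ : {δ : Fin n → Bool //
          (Finset.univ.filter (fun i => δ i = true)).card ≤ Γ ∧ ∀ i ∈ I, δ i = γ.1 i},
        cbar j + (if δ.1 j = true then chat j else 0)) ≤ M := by
    intro γ
    obtain ⟨j₀, _, hj₀⟩ := Finset.exists_mem_eq_inf' hne (fun j => cbar j + chat j)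
    calc (⨅ j : Fin n, ⨆ δ : {δ : Fin n → Bool //
            (Finset.univ.filter (fun i => δ i = true)).card ≤ Γ ∧ ∀ i ∈ I, δ i = γ.1 i},
          cbar j + (if δ.1 j = true then chat j else 0))
        ≤ _ := ciInf_le (Finite.bddBelow_range _) j₀
      _ ≤ cbar j₀ + chat j₀ := hsup_le γ j₀
      _ = M := by rw [hM, hj₀]
  -- the special γ⋆
  have hγcard : (Finset.univ.filter (fun i => (decide (i ∈ I)) = true)).card ≤ Γ := by
    have : Finset.univ.filter (fun i => (decide (i ∈ I)) = true) = I := by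
      ext i; simp
    rw [this]; exact hI.le
  set γs : {γ : Fin n → Bool // (Finset.univ.filter (fun i => γ i = true)).card ≤ Γ} :=
    ⟨fun i => decide (i ∈ I), hγcard⟩ with hγs
  have hγne : Nonempty {γ : Fin n → Bool //
      (Finset.univ.filter (fun i => γ i = true)).card ≤ Γ} := ⟨γs⟩
  -- M ≤ inner inf at γ⋆
  have hMle : M ≤ ⨅ j : Fin n,
      ⨆ δ : {δ : Fin n → Bool //
          (Finset.univ.filter (fun i => δ i = true)).card ≤ Γ ∧ ∀ i ∈ I, δ i = γs.1 i},
        cbar j + (if δ.1 j = true then chat j else 0) := by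
    haveI : Nonempty (Fin n) := Fin.pos_iff_nonempty.mp hn
    refine le_ciInf fun j => ?_
    have hδcard : (Finset.univ.filter (fun i => (decide (i ∈ insert j I)) = true)).card ≤ Γ := by
      have : Finset.univ.filter (fun i => (decide (i ∈ insert j I)) = true) = insert j I := by
        ext i; simp
      rw [this]
      exact (Finset.card_insert_le j I).trans (Nat.succ_le_of_lt hI)
    have hagree : ∀ i ∈ I, (decide (i ∈ insert j I)) = γs.1 i := by
      intro i hi
      simp [hγs, hi]
    set δs : {δ : Fin n → Bool //
        (Finset.univ.filter (fun i => δ i = true)).card ≤ Γ ∧ ∀ i ∈ I, δ i = γs.1 i} :=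
      ⟨fun i => decide (i ∈ insert j I), hδcard, hagree⟩
    have h1 : M ≤ cbar j + chat j := Finset.inf'_le _ (Finset.mem_univ j)
    have h2 : cbar j + (if δs.1 j = true then chat j else 0) = cbar j + chat j := by
      simp [δs]
    have h3 := le_ciSup (hbddA γs j) δs
    rw [h2] at h3
    exact h1.trans h3
  -- conclude
  unfold Psi
  refine le_antisymm (ciSup_le hfle) ?_
  exact hMle.trans (le_ciSup ⟨M, by rintro _ ⟨γ, rfl⟩; exact hfle γ⟩ γs)
end

section
/- Assume items are sorted so that c̄ is non-decreasing, and let I = {j_1 < j_2 < ... < j_Γ} ⊆ [n] be a query set with exactly Γ elements (listed in increasing order of c̄), where |I| = Γ < n. Then Ψ(I) = min{ min_{j∈[n]} (c̄_j + ĉ_j), max{ min_{j ∈ [n]\I} c̄_j, c̄_{j_Γ} } }. -/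
open Finset

/-!
For an observation `γ` of the deviations on `I`, the adversary's best cost for item `j`
(`worstCost`) is `c̄ⱼ + [γⱼ] ĉⱼ` for `j ∈ I`, and for `j ∉ I` it is `c̄ⱼ + ĉⱼ` unless the budget
is already exhausted on `I`, in which case it is `c̄ⱼ`. Hence an observation that deviates on all
of `I` caps `Ψ` at `min_{j ∉ I} c̄ⱼ`, and any other one at `max_{j ∈ I} c̄ⱼ`; conversely the
observations `1_I` and `1_{I ∖ {j_Γ}}` attain these two values, up to the cap `min_j (c̄ⱼ + ĉⱼ)`.
-/

section WorstCost

variable {ι : Type*} [Fintype ι]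

def deviations (δ : ι → Bool) : Finset ι := univ.filter fun i => δ i = true

@[simp]
lemma mem_deviations {δ : ι → Bool} {i : ι} : i ∈ deviations δ ↔ δ i = true := by
  simp [deviations]

@[simp]
lemma deviations_decide_mem [DecidableEq ι] (S : Finset ι) :
    deviations (fun i => decide (i ∈ S)) = S := by
  ext; simp

def budgetScenarios (Γ : ℕ) : Set (ι → Bool) := {δ | (deviations δ).card ≤ Γ}

@[simp]
lemma mem_budgetScenarios {Γ : ℕ} {δ : ι → Bool} :
    δ ∈ budgetScenarios Γ ↔ (deviations δ).card ≤ Γ :=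
  Iff.rfl

def consistentScenarios (Γ : ℕ) (I : Finset ι) (γ : ι → Bool) : Set (ι → Bool) :=
  {δ | (deviations δ).card ≤ Γ ∧ ∀ i ∈ I, δ i = γ i}

-- The inner `max_{δ ∈ Δ^Γ(I,γ)} (c̄ⱼ + δⱼ ĉⱼ)` in the definition of `Ψ`.
noncomputable def worstCost (Γ : ℕ) (cbar chat : ι → ℝ) (I : Finset ι) (γ : ι → Bool)
    (j : ι) : ℝ :=
  ⨆ δ : consistentScenarios Γ I γ, cbar j + if δ.1 j = true then chat j else 0

variable {Γ : ℕ} {cbar chat : ι → ℝ} {I : Finset ι} {γ : ι → Bool} {j : ι}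

lemma restrict_mem_consistentScenarios [DecidableEq ι] (hI : I.card ≤ Γ) :
    (fun i => γ i && decide (i ∈ I)) ∈ consistentScenarios Γ I γ :=
  ⟨(card_le_card fun i => by simp +contextual).trans hI, fun i hi => by simp [hi]⟩

lemma le_worstCost {δ : ι → Bool} (hδ : δ ∈ consistentScenarios Γ I γ) (j : ι) :
    cbar j + (if δ j = true then chat j else 0) ≤ worstCost Γ cbar chat I γ j :=
  le_ciSup (f := fun δ : consistentScenarios Γ I γ => cbar j + if δ.1 j = true then chat j else 0)
    (Set.finite_range _).bddAbove ⟨δ, hδ⟩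

lemma worstCost_le {v : ℝ} (hI : I.card ≤ Γ)
    (h : ∀ δ ∈ consistentScenarios Γ I γ, cbar j + (if δ j = true then chat j else 0) ≤ v) :
    worstCost Γ cbar chat I γ j ≤ v := by
  classical
  have : Nonempty (consistentScenarios Γ I γ) := ⟨_, restrict_mem_consistentScenarios hI⟩
  exact ciSup_le fun δ => h δ.1 δ.2

lemma worstCost_le_add (hI : I.card ≤ Γ) (hchat : 0 ≤ chat j) :
    worstCost Γ cbar chat I γ j ≤ cbar j + chat j :=
  worstCost_le hI fun δ _ => by split_ifs <;> linarith

lemma worstCost_of_mem (hI : I.card ≤ Γ) (hj : j ∈ I) :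
    worstCost Γ cbar chat I γ j = cbar j + if γ j = true then chat j else 0 := by
  classical
  refine le_antisymm (worstCost_le hI fun δ hδ => by rw [hδ.2 j hj]) ?_
  simpa [hj] using le_worstCost (cbar := cbar) (chat := chat)
    (restrict_mem_consistentScenarios (γ := γ) hI) j

lemma worstCost_of_notMem_of_saturated (hI : I.card = Γ) (hγ : ∀ i ∈ I, γ i = true)
    (hj : j ∉ I) : worstCost Γ cbar chat I γ j = cbar j := by
  classical
  refine le_antisymm (worstCost_le hI.le fun δ ⟨hδ, hδI⟩ => ?_) ?_
  · have hδj : δ j = false := by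
      by_contra hδj
      have : insert j I ⊆ deviations δ := by
        intro i hi
        rcases mem_insert.mp hi with rfl | hi
        · simpa using hδj
        · simpa [hδI i hi] using hγ i hi
      have := card_le_card this
      rw [card_insert_of_notMem hj] at this
      omega
    simp [hδj]
  · have hδ : (fun i => decide (i ∈ I)) ∈ consistentScenarios Γ I γ :=
      ⟨by simp [hI], fun i hi => by simp [hi, hγ i hi]⟩
    simpa [hj] using le_worstCost (cbar := cbar) (chat := chat) hδ j

lemma add_le_worstCost_decide_mem [DecidableEq ι] {S : Finset ι} (hSI : S ⊆ I)
    (hS : S.card < Γ) (hj : j ∉ I) :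
    cbar j + chat j ≤ worstCost Γ cbar chat I (fun i => decide (i ∈ S)) j := by
  have hjS : j ∉ S := fun h => hj (hSI h)
  have hδ : (fun i => decide (i ∈ insert j S)) ∈ consistentScenarios Γ I (· ∈ S) :=
    ⟨by rw [deviations_decide_mem, card_insert_of_notMem hjS]; omega,
      fun i hi => by simp [show i ≠ j by rintro rfl; exact hj hi]⟩
  simpa using le_worstCost (cbar := cbar) (chat := chat) hδ j

end WorstCost

section Psi

variable {n Γ : ℕ} {cbar chat : Fin n → ℝ} {I : Finset (Fin n)}

lemma Psi_eq_iSup_iInf_worstCost :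
    Psi n Γ cbar chat I = ⨆ γ : budgetScenarios Γ, ⨅ j, worstCost Γ cbar chat I γ.1 j :=
  rfl

lemma Psi_le {v : ℝ} (h : ∀ γ ∈ budgetScenarios Γ, ∃ j, worstCost Γ cbar chat I γ j ≤ v) :
    Psi n Γ cbar chat I ≤ v := by
  have : Nonempty (budgetScenarios (ι := Fin n) Γ) := ⟨fun _ => false, by simp [deviations]⟩
  rw [Psi_eq_iSup_iInf_worstCost]
  refine ciSup_le fun γ => ?_
  obtain ⟨j, hj⟩ := h γ.1 γ.2
  exact (ciInf_le (Set.finite_range _).bddBelow j).trans hj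

lemma le_Psi [Nonempty (Fin n)] {v : ℝ} {γ : Fin n → Bool} (hγ : γ ∈ budgetScenarios Γ)
    (h : ∀ j, v ≤ worstCost Γ cbar chat I γ j) : v ≤ Psi n Γ cbar chat I := by
  rw [Psi_eq_iSup_iInf_worstCost]
  exact (le_ciInf h).trans (le_ciSup (f := fun γ : budgetScenarios Γ =>
    ⨅ j, worstCost Γ cbar chat I γ.1 j) (Set.finite_range _).bddAbove ⟨γ, hγ⟩)

variable (hcard : I.card = Γ) (huniv : (univ : Finset (Fin n)).Nonempty) (hI : I.Nonempty)
  (hIc : Iᶜ.Nonempty)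
include hcard

lemma Psi_le_max_inf'_sup' :
    Psi n Γ cbar chat I ≤ max (Iᶜ.inf' hIc cbar) (I.sup' hI cbar) := by
  refine Psi_le fun γ _ => ?_
  by_cases hγ : ∀ i ∈ I, γ i = true
  · obtain ⟨j, hj, hjm⟩ := exists_mem_eq_inf' hIc cbar
    refine ⟨j, ?_⟩
    rw [worstCost_of_notMem_of_saturated hcard hγ (mem_compl.mp hj), ← hjm]
    exact le_max_left _ _
  · obtain ⟨i, hi, hγi⟩ := not_forall₂.mp hγ
    refine ⟨i, ?_⟩
    rw [worstCost_of_mem hcard.le hi, if_neg hγi, add_zero]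
    exact (le_sup' cbar hi).trans (le_max_right _ _)

lemma Psi_le_inf'_add (hchat : ∀ j, 0 ≤ chat j) :
    Psi n Γ cbar chat I ≤ univ.inf' huniv fun j => cbar j + chat j := by
  obtain ⟨j, -, hj⟩ := exists_mem_eq_inf' huniv fun j => cbar j + chat j
  exact Psi_le fun γ _ => ⟨j, hj ▸ worstCost_le_add hcard.le (hchat j)⟩

lemma min_inf'_add_inf'_le_Psi :
    min (univ.inf' huniv fun j => cbar j + chat j) (Iᶜ.inf' hIc cbar) ≤ Psi n Γ cbar chat I := by
  classical
  have := univ_nonempty_iff.mp huniv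
  refine le_Psi (γ := (· ∈ I)) (by simp [hcard]) fun j => ?_
  by_cases hj : j ∈ I
  · rw [worstCost_of_mem hcard.le hj, if_pos (decide_eq_true hj)]
    exact (min_le_left _ _).trans (inf'_le (fun j => cbar j + chat j) (mem_univ j))
  · rw [worstCost_of_notMem_of_saturated hcard (by simp) hj]
    exact (min_le_right _ _).trans (inf'_le _ (mem_compl.mpr hj))

lemma min_inf'_add_sup'_le_Psi :
    min (univ.inf' huniv fun j => cbar j + chat j) (I.sup' hI cbar) ≤ Psi n Γ cbar chat I := by
  classical
  have := univ_nonempty_iff.mp huniv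
  have hM : ∀ j, min (univ.inf' huniv fun j => cbar j + chat j) (I.sup' hI cbar) ≤
      cbar j + chat j := fun j => (min_le_left _ _).trans (inf'_le _ (mem_univ j))
  obtain ⟨k, hk, hkK⟩ := exists_mem_eq_sup' hI cbar
  have hcard_erase : (I.erase k).card < Γ := by
    rw [card_erase_of_mem hk]; have := hI.card_pos; omega
  refine le_Psi (γ := (· ∈ I.erase k)) (by
    rw [mem_budgetScenarios, deviations_decide_mem]; exact hcard_erase.le) fun j => ?_
  by_cases hj : j ∈ I
  · rw [worstCost_of_mem hcard.le hj]
    by_cases hjk : j = k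
    · subst hjk; simp [hkK]
    · simpa [hj, hjk] using hM j
  · exact (hM j).trans (add_le_worstCost_decide_mem (erase_subset k I) hcard_erase hj)

theorem Psi_eq_min_inf'_add_max_inf'_sup' (hchat : ∀ j, 0 ≤ chat j) :
    Psi n Γ cbar chat I =
      min (univ.inf' huniv fun j => cbar j + chat j) (max (Iᶜ.inf' hIc cbar) (I.sup' hI cbar)) :=
  le_antisymm (le_min (Psi_le_inf'_add hcard huniv hchat) (Psi_le_max_inf'_sup' hcard hI hIc))
    (by
      rw [min_max_distrib_left]
      exact max_le (min_inf'_add_inf'_le_Psi hcard huniv hIc)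
        (min_inf'_add_sup'_le_Psi hcard huniv hI))

end Psi

theorem stmt2 (n Γ : ℕ) (hΓ : 1 ≤ Γ) (hΓn : Γ < n) (cbar chat : Fin n → ℝ)
    (hchat : ∀ j, 0 ≤ chat j) (hmono : Monotone cbar)
    (I : Finset (Fin n)) (hcard : I.card = Γ) :
    Psi n Γ cbar chat I =
      min
        (Finset.univ.inf'
          (Finset.univ_nonempty_iff.mpr (Fin.pos_iff_nonempty.mp (by omega)))
          (fun j => cbar j + chat j))
        (max
          (Iᶜ.inf' (Finset.card_pos.mp
            (by rw [Finset.card_compl, hcard, Fintype.card_fin]; omega)) cbar)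
          (cbar (I.max' (Finset.card_pos.mp (by rw [hcard]; omega))))) := by
  rw [hmono.map_finset_max', max'_eq_sup', sup'_image]
  exact Psi_eq_min_inf'_add_max_inf'_sup' hcard _ _ _ hchat
end

section
/- Assume items are sorted so that c̄ is non-decreasing, and let I = {j_1 < ... < j_Γ < j_{Γ+1} < ... < j_m} with Γ+1 ≤ m ≤ n−1. Then Ψ(I) = min{ min_{j∈[n]} (c̄_j + ĉ_j), max{ min{ c̄_{j_{Γ+1}}, min_{j ∈ [n]\I} c̄_j }, c̄_{j_Γ} } }. -/
open Finset

theorem stmt3 (n Γ m : ℕ) (hΓ : 1 ≤ Γ) (hΓm : Γ + 1 ≤ m) (hm : m ≤ n - 1) (hn : 1 ≤ n)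
    (cbar chat : Fin n → ℝ) (hchat : ∀ j, 0 ≤ chat j) (hmono : Monotone cbar)
    (I : Finset (Fin n)) (hcard : I.card = m) :
    Psi n Γ cbar chat I =
      min
        (Finset.univ.inf'
          (Finset.univ_nonempty_iff.mpr (Fin.pos_iff_nonempty.mp (by omega)))
          (fun j => cbar j + chat j))
        (max
          (min
            (cbar (I.orderEmbOfFin hcard ⟨Γ, by omega⟩))
            (Iᶜ.inf' (Finset.card_pos.mp
              (by rw [Finset.card_compl, hcard, Fintype.card_fin]; omega)) cbar))
          (cbar (I.orderEmbOfFin hcard ⟨Γ - 1, by omega⟩))) := by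
  have hΓm1 : Γ - 1 < m := by omega
  have hΓm2 : Γ < m := by omega
  set e : Fin m ↪o Fin n := I.orderEmbOfFin hcard with he
  have heI : ∀ t, e t ∈ I := fun t => I.orderEmbOfFin_mem hcard t
  have hIe : ∀ j ∈ I, ∃ t, e t = j := by
    intro j hj
    have hr := I.range_orderEmbOfFin hcard
    have : j ∈ Set.range (e : Fin m → Fin n) := by rw [hr]; exact hj
    exact this
  haveI hne_fin : Nonempty (Fin n) := ⟨⟨0, by omega⟩⟩
  have hu : (Finset.univ : Finset (Fin n)).Nonempty := ⟨⟨0, by omega⟩, Finset.mem_univ _⟩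
  have hIc : Iᶜ.Nonempty := Finset.card_pos.mp
    (by rw [Finset.card_compl, hcard, Fintype.card_fin]; omega)
  set M : ℝ := Finset.univ.inf' hu (fun j => cbar j + chat j) with hM
  set Bv : ℝ := min (cbar (e ⟨Γ, hΓm2⟩)) (Iᶜ.inf' hIc cbar) with hBv
  set Av : ℝ := cbar (e ⟨Γ - 1, hΓm1⟩) with hAv
  show Psi n Γ cbar chat I = min M (max Bv Av)
  -- cardinality of initial segments
  have cardlt : ∀ c : ℕ, c ≤ m →
      ((Finset.univ.filter (fun t : Fin m => t.val < c))).card = c := by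
    intro c hc
    have hx : (Finset.univ.filter (fun t : Fin m => t.val < c))
        = Finset.map ⟨Fin.castLE hc, Fin.castLE_injective hc⟩ Finset.univ := by
      ext x
      simp only [Finset.mem_filter, Finset.mem_univ, true_and, Finset.mem_map,
        Function.Embedding.coeFn_mk]
      constructor
      · intro hx; exact ⟨⟨x.val, hx⟩, rfl⟩
      · rintro ⟨y, -, rfl⟩; exact y.isLt
    rw [hx, Finset.card_map, Finset.card_univ, Fintype.card_fin]
  -- pigeonhole
  have pigeon : ∀ (γ : Fin n → Bool) (c : ℕ), c ≤ m →
      (I.filter (fun i => γ i = true)).card < c →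
      ∃ t : Fin m, t.val < c ∧ γ (e t) = false := by
    intro γ c hc hlt
    by_contra h
    push_neg at h
    have h' : ∀ t : Fin m, t.val < c → γ (e t) = true := by
      intro t ht
      have := h t ht
      revert this; cases γ (e t) <;> simp
    have hsub : (Finset.univ.filter (fun t : Fin m => t.val < c)).image (fun t => e t)
        ⊆ I.filter (fun i => γ i = true) := by
      intro j hj
      simp only [Finset.mem_image, Finset.mem_filter, Finset.mem_univ, true_and] at hj ⊢
      obtain ⟨t, ht, rfl⟩ := hj
      exact ⟨heI t, h' t ht⟩
    have hcardim : ((Finset.univ.filter (fun t : Fin m => t.val < c)).image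
        (fun t => e t)).card = c := by
      rw [Finset.card_image_of_injective _ e.injective, cardlt c hc]
    have := Finset.card_le_card hsub
    omega
  haveI hγne : Nonempty {γ : Fin n → Bool //
      (Finset.univ.filter (fun i => γ i = true)).card ≤ Γ} :=
    ⟨⟨fun _ => false, by simp⟩⟩
  have hδne : ∀ γ : {γ : Fin n → Bool //
      (Finset.univ.filter (fun i => γ i = true)).card ≤ Γ},
      Nonempty {δ : Fin n → Bool //
        (Finset.univ.filter (fun i => δ i = true)).card ≤ Γ ∧ ∀ i ∈ I, δ i = γ.1 i} := by
    intro γ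
    refine ⟨⟨fun i => decide (i ∈ I) && γ.1 i, ?_, ?_⟩⟩
    · have hx : (Finset.univ.filter (fun i => (decide (i ∈ I) && γ.1 i) = true))
          = Finset.univ.filter (fun i => γ.1 i = true) ∩ I := by
        ext i; simp [Finset.mem_filter, and_comm]
      rw [hx]
      exact le_trans (Finset.card_le_card (Finset.inter_subset_left)) γ.2
    · intro i hi; simp [hi]
  unfold Psi
  apply le_antisymm
  · -- upper bound
    refine ciSup_le fun γ => ?_
    haveI := hδne γ
    refine le_min ?_ ?_
    · -- ≤ M
      refine Finset.le_inf' _ _ fun j _ => ?_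
      refine le_trans (ciInf_le (Set.finite_range _).bddBelow j) ?_
      refine ciSup_le fun δ => ?_
      have hc := hchat j
      split <;> linarith
    · -- ≤ max Bv Av
      have hkΓ : (I.filter (fun i => γ.1 i = true)).card ≤ Γ :=
        le_trans (Finset.card_le_card
          (Finset.monotone_filter_left _ (Finset.subset_univ I))) γ.2
      by_cases hkeq : (I.filter (fun i => γ.1 i = true)).card = Γ
      · refine le_max_of_le_left (le_min ?_ ?_)
        · obtain ⟨t, ht, hft⟩ := pigeon γ.1 (Γ + 1) hΓm (by omega)
          refine le_trans (ciInf_le (Set.finite_range _).bddBelow (e t)) ?_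
          have h1 : (⨆ δ : {δ : Fin n → Bool //
              (Finset.univ.filter (fun i => δ i = true)).card ≤ Γ ∧
                ∀ i ∈ I, δ i = γ.1 i},
              cbar (e t) + (if δ.1 (e t) = true then chat (e t) else 0)) ≤ cbar (e t) := by
            refine ciSup_le fun δ => ?_
            have hδt : δ.1 (e t) = false := by rw [δ.2.2 _ (heI t), hft]
            rw [hδt]; simp
          refine le_trans h1 (hmono (e.monotone ?_))
          simp only [Fin.le_def]; omega
        · refine Finset.le_inf' _ _ fun j hj => ?_
          have hjI : j ∉ I := Finset.mem_compl.mp hj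
          refine le_trans (ciInf_le (Set.finite_range _).bddBelow j) ?_
          refine ciSup_le fun δ => ?_
          have hδj : δ.1 j = false := by
            by_contra htrue
            have htrue' : δ.1 j = true := by
              revert htrue; cases δ.1 j <;> simp
            have hins : insert j (I.filter (fun i => γ.1 i = true))
                ⊆ Finset.univ.filter (fun i => δ.1 i = true) := by
              intro x hx
              simp only [Finset.mem_insert, Finset.mem_filter] at hx ⊢
              refine ⟨Finset.mem_univ x, ?_⟩
              rcases hx with rfl | ⟨hxI, hxγ⟩
              · exact htrue'
              · rw [δ.2.2 x hxI]; exact hxγ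
            have hcardins : (insert j (I.filter (fun i => γ.1 i = true))).card
                = (I.filter (fun i => γ.1 i = true)).card + 1 :=
              Finset.card_insert_of_notMem
                (fun hmem => hjI (Finset.mem_filter.mp hmem).1)
            have h2 := Finset.card_le_card hins
            have h3 := δ.2.1
            omega
          rw [hδj]; simp
      · refine le_max_of_le_right ?_
        obtain ⟨t, ht, hft⟩ := pigeon γ.1 Γ (by omega) (by omega)
        refine le_trans (ciInf_le (Set.finite_range _).bddBelow (e t)) ?_
        have h1 : (⨆ δ : {δ : Fin n → Bool //
            (Finset.univ.filter (fun i => δ i = true)).card ≤ Γ ∧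
              ∀ i ∈ I, δ i = γ.1 i},
            cbar (e t) + (if δ.1 (e t) = true then chat (e t) else 0)) ≤ cbar (e t) := by
          refine ciSup_le fun δ => ?_
          have hδt : δ.1 (e t) = false := by rw [δ.2.2 _ (heI t), hft]
          rw [hδt]; simp
        refine le_trans h1 (hmono (e.monotone ?_))
        simp only [Fin.le_def]; omega
  · -- lower bound
    rw [min_max_distrib_left]
    refine max_le ?_ ?_
    · -- min M Bv ≤ sup, via γB
      set SB := (Finset.univ.filter (fun t : Fin m => t.val < Γ)).image (fun t => e t)
        with hSB
      have hSBcard : SB.card = Γ := by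
        rw [hSB, Finset.card_image_of_injective _ e.injective, cardlt Γ (by omega)]
      have hSBI : SB ⊆ I := by
        intro x hx
        rw [hSB] at hx
        simp only [Finset.mem_image, Finset.mem_filter, Finset.mem_univ, true_and] at hx
        obtain ⟨t, -, rfl⟩ := hx
        exact heI t
      have hfiltSB : Finset.univ.filter (fun i => (decide (i ∈ SB) : Bool) = true) = SB := by
        ext x; simp
      have hγBmem : (Finset.univ.filter
          (fun i => (decide (i ∈ SB) : Bool) = true)).card ≤ Γ := by
        rw [hfiltSB, hSBcard]
      refine le_trans ?_ (le_ciSup (Set.finite_range _).bddAbove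
        (⟨fun i => decide (i ∈ SB), hγBmem⟩ : {γ : Fin n → Bool //
          (Finset.univ.filter (fun i => γ i = true)).card ≤ Γ}))
      refine le_ciInf fun j => ?_
      have hδself : (Finset.univ.filter
          (fun i => (decide (i ∈ SB) : Bool) = true)).card ≤ Γ ∧
          ∀ i ∈ I, (decide (i ∈ SB) : Bool) = decide (i ∈ SB) :=
        ⟨hγBmem, fun i _ => rfl⟩
      have hle := le_ciSup (Set.finite_range fun δ : {δ : Fin n → Bool //
          (Finset.univ.filter (fun i => δ i = true)).card ≤ Γ ∧
            ∀ i ∈ I, δ i = decide (i ∈ SB)} =>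
          cbar j + (if δ.1 j = true then chat j else 0)).bddAbove
        ⟨fun i => decide (i ∈ SB), hδself⟩
      by_cases hjS : j ∈ SB
      · refine le_trans (min_le_left _ _) ?_
        refine le_trans (Finset.inf'_le _ (Finset.mem_univ j)) ?_
        refine le_trans (le_of_eq ?_) hle
        simp [hjS]
      · by_cases hjI : j ∈ I
        · refine le_trans (min_le_right _ _) (le_trans (min_le_left _ _) ?_)
          obtain ⟨t, rfl⟩ := hIe j hjI
          have htΓ : Γ ≤ t.val := by
            by_contra hcon
            refine hjS ?_
            rw [hSB]
            simp only [Finset.mem_image, Finset.mem_filter, Finset.mem_univ, true_and]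
            exact ⟨t, by omega, rfl⟩
          refine le_trans (hmono (e.monotone (show (⟨Γ, hΓm2⟩ : Fin m) ≤ t by
            simp only [Fin.le_def]; omega))) ?_
          refine le_trans (le_of_eq ?_) hle
          simp [hjS]
        · refine le_trans (min_le_right _ _) (le_trans (min_le_right _ _) ?_)
          refine le_trans (Finset.inf'_le _ (Finset.mem_compl.mpr hjI)) ?_
          refine le_trans (le_of_eq ?_) hle
          simp [hjS]
    · -- min M Av ≤ sup, via γA
      set SA := (Finset.univ.filter (fun t : Fin m => t.val < Γ - 1)).image (fun t => e t)
        with hSA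
      have hSAcard : SA.card = Γ - 1 := by
        rw [hSA, Finset.card_image_of_injective _ e.injective, cardlt (Γ - 1) (by omega)]
      have hSAI : SA ⊆ I := by
        intro x hx
        rw [hSA] at hx
        simp only [Finset.mem_image, Finset.mem_filter, Finset.mem_univ, true_and] at hx
        obtain ⟨t, -, rfl⟩ := hx
        exact heI t
      have hfiltSA : Finset.univ.filter (fun i => (decide (i ∈ SA) : Bool) = true) = SA := by
        ext x; simp
      have hγAmem : (Finset.univ.filter
          (fun i => (decide (i ∈ SA) : Bool) = true)).card ≤ Γ := by
        rw [hfiltSA, hSAcard]; omega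
      refine le_trans ?_ (le_ciSup (Set.finite_range _).bddAbove
        (⟨fun i => decide (i ∈ SA), hγAmem⟩ : {γ : Fin n → Bool //
          (Finset.univ.filter (fun i => γ i = true)).card ≤ Γ}))
      refine le_ciInf fun j => ?_
      have hδself : (Finset.univ.filter
          (fun i => (decide (i ∈ SA) : Bool) = true)).card ≤ Γ ∧
          ∀ i ∈ I, (decide (i ∈ SA) : Bool) = decide (i ∈ SA) :=
        ⟨hγAmem, fun i _ => rfl⟩
      have hbdd := (Set.finite_range fun δ : {δ : Fin n → Bool //
          (Finset.univ.filter (fun i => δ i = true)).card ≤ Γ ∧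
            ∀ i ∈ I, δ i = decide (i ∈ SA)} =>
          cbar j + (if δ.1 j = true then chat j else 0)).bddAbove
      by_cases hjS : j ∈ SA
      · refine le_trans (min_le_left _ _) ?_
        refine le_trans (Finset.inf'_le _ (Finset.mem_univ j)) ?_
        refine le_trans (le_of_eq ?_)
          (le_ciSup hbdd ⟨fun i => decide (i ∈ SA), hδself⟩)
        simp [hjS]
      · by_cases hjI : j ∈ I
        · refine le_trans (min_le_right _ _) ?_
          obtain ⟨t, rfl⟩ := hIe j hjI
          have htΓ : Γ - 1 ≤ t.val := by
            by_contra hcon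
            refine hjS ?_
            rw [hSA]
            simp only [Finset.mem_image, Finset.mem_filter, Finset.mem_univ, true_and]
            exact ⟨t, by omega, rfl⟩
          refine le_trans (hmono (e.monotone (show (⟨Γ - 1, hΓm1⟩ : Fin m) ≤ t by
            simp only [Fin.le_def]; omega))) ?_
          refine le_trans (le_of_eq ?_)
            (le_ciSup hbdd ⟨fun i => decide (i ∈ SA), hδself⟩)
          simp [hjS]
        · -- j ∉ I : use δ := γA with j added
          refine le_trans (min_le_left _ _) ?_
          refine le_trans (Finset.inf'_le _ (Finset.mem_univ j)) ?_
          have hδj : (Finset.univ.filter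
              (fun i => (decide (i ∈ SA) || decide (i = j)) = true)).card ≤ Γ ∧
              ∀ i ∈ I, (decide (i ∈ SA) || decide (i = j)) = decide (i ∈ SA) := by
            constructor
            · have hx : Finset.univ.filter
                  (fun i => (decide (i ∈ SA) || decide (i = j)) = true)
                  = insert j SA := by
                ext x
                simp [Finset.mem_insert, or_comm]
              rw [hx]
              have := Finset.card_insert_le j SA
              omega
            · intro i hi
              have hne : i ≠ j := fun h => hjI (h ▸ hi)
              simp [hne]
          refine le_trans (le_of_eq ?_)
            (le_ciSup hbdd ⟨fun i => decide (i ∈ SA) || decide (i = j), hδj⟩)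
          simp [hjS]
end

section
/- Assume c̄ non-decreasing. Let I and I' be two query sets each of cardinality exactly Γ, with largest elements (in the sorted order of c̄) j_Γ and j'_Γ respectively, and suppose j'_Γ > j_Γ. Then Ψ(I) ≤ Ψ(I'). -/
open Finset

/-- Inner sup for a fixed query set, signal and item. -/
noncomputable def Sval (n Γ : ℕ) (cbar chat : Fin n → ℝ) (Iq : Finset (Fin n))
    (γ : Fin n → Bool) (j : Fin n) : ℝ :=
  ⨆ δ : {δ : Fin n → Bool //
      (Finset.univ.filter (fun i => δ i = true)).card ≤ Γ ∧ ∀ i ∈ Iq, δ i = γ i},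
    cbar j + (if δ.1 j = true then chat j else 0)

lemma Psi_eq (n Γ : ℕ) (cbar chat : Fin n → ℝ) (Iq : Finset (Fin n)) :
    Psi n Γ cbar chat Iq =
      ⨆ γ : {γ : Fin n → Bool // (Finset.univ.filter (fun i => γ i = true)).card ≤ Γ},
        ⨅ j : Fin n, Sval n Γ cbar chat Iq γ.1 j := rfl

lemma delta_nonempty (n Γ : ℕ) (Iq : Finset (Fin n)) (hIq : Iq.card ≤ Γ)
    (γ : Fin n → Bool) :
    Nonempty {δ : Fin n → Bool //
      (Finset.univ.filter (fun i => δ i = true)).card ≤ Γ ∧ ∀ i ∈ Iq, δ i = γ i} := by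
  classical
  refine ⟨⟨fun i => if i ∈ Iq then γ i else false, ?_, ?_⟩⟩
  · refine le_trans (le_trans (Finset.card_le_card ?_) le_rfl) hIq
    intro i hi
    simp only [Finset.mem_filter, Finset.mem_univ, true_and] at hi
    by_contra hni
    rw [if_neg hni] at hi
    exact Bool.false_ne_true hi
  · intro i hi; simp [hi]

theorem stmt4 (n Γ : ℕ) (hΓ : 1 ≤ Γ) (hΓn : Γ < n) (cbar chat : Fin n → ℝ)
    (hchat : ∀ j, 0 ≤ chat j) (hmono : Monotone cbar)
    (I I' : Finset (Fin n)) (hI : I.card = Γ) (hI' : I'.card = Γ)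
    (hlt : I.max' (Finset.card_pos.mp (by rw [hI]; omega)) <
           I'.max' (Finset.card_pos.mp (by rw [hI']; omega))) :
    Psi n Γ cbar chat I ≤ Psi n Γ cbar chat I' := by
  classical
  have hn0 : 0 < n := lt_of_le_of_lt (Nat.zero_le Γ) hΓn
  haveI : Nonempty (Fin n) := ⟨⟨0, hn0⟩⟩
  have hIne : I.Nonempty := Finset.card_pos.mp (by rw [hI]; omega)
  have hI'ne : I'.Nonempty := Finset.card_pos.mp (by rw [hI']; omega)
  set p := I'.max' hI'ne with hp
  set q := I.max' hIne with hq
  have hqp : q < p := hlt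
  -- q ≥ Γ - 1, hence Γ ≤ p
  have hIq : I ⊆ Finset.Iic q := fun i hi => Finset.mem_Iic.mpr (Finset.le_max' I i hi)
  have hΓq : Γ ≤ (q : ℕ) + 1 := by
    have := Finset.card_le_card hIq
    rwa [hI, Fin.card_Iic] at this
  have hΓp : Γ ≤ (p : ℕ) := by
    have : (q : ℕ) < (p : ℕ) := hqp
    omega
  -- the minimal element outside I
  have hcompl : (Finset.univ \ I).Nonempty := by
    rw [← Finset.card_pos, Finset.card_sdiff_of_subset (Finset.subset_univ I), Finset.card_univ,
      Fintype.card_fin, hI]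
    omega
  set m := (Finset.univ \ I).min' hcompl with hm
  have hmI : m ∉ I := by
    have := Finset.min'_mem (Finset.univ \ I) hcompl
    rw [Finset.mem_sdiff] at this
    exact this.2
  have hmΓ : (m : ℕ) ≤ Γ := by
    by_contra hcon
    push_neg at hcon
    have hsub : Finset.Iic (⟨Γ, hΓn⟩ : Fin n) ⊆ I := by
      intro i hi
      by_contra hiI
      have hmi : m ≤ i := Finset.min'_le _ i (Finset.mem_sdiff.mpr ⟨Finset.mem_univ i, hiI⟩)
      have h1 : (m : ℕ) ≤ (i : ℕ) := hmi
      have h2 : i ≤ (⟨Γ, hΓn⟩ : Fin n) := Finset.mem_Iic.mp hi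
      have h3 : (i : ℕ) ≤ Γ := h2
      omega
    have := Finset.card_le_card hsub
    rw [Fin.card_Iic, hI] at this
    simp only [Fin.val_mk] at this
    omega
  have hmp : m ≤ p := by
    have : (m : ℕ) ≤ (p : ℕ) := le_trans hmΓ hΓp
    exact this
  -- the distinguished signal for I'
  set γ₀ : Fin n → Bool := fun i => decide (i ∈ I' ∧ i ≠ p) with hγ₀
  have hγ₀filter : Finset.univ.filter (fun i => γ₀ i = true) = I'.erase p := by
    ext i
    simp only [hγ₀, Finset.mem_filter, Finset.mem_univ, true_and, decide_eq_true_eq,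
      Finset.mem_erase]
    tauto
  have hγ₀card : (Finset.univ.filter (fun i => γ₀ i = true)).card ≤ Γ := by
    rw [hγ₀filter, Finset.card_erase_of_mem (Finset.max'_mem I' hI'ne), hI']
    omega
  have hγ₀p : γ₀ p = false := by simp [hγ₀]
  -- nonemptiness instances
  haveI hne1 : ∀ γ : Fin n → Bool, Nonempty {δ : Fin n → Bool //
      (Finset.univ.filter (fun i => δ i = true)).card ≤ Γ ∧ ∀ i ∈ I, δ i = γ i} :=
    fun γ => delta_nonempty n Γ I (le_of_eq hI) γ
  haveI hne2 : ∀ γ : Fin n → Bool, Nonempty {δ : Fin n → Bool //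
      (Finset.univ.filter (fun i => δ i = true)).card ≤ Γ ∧ ∀ i ∈ I', δ i = γ i} :=
    fun γ => delta_nonempty n Γ I' (le_of_eq hI') γ
  -- Step 2 pieces: lower bounds on Sval for I' with γ₀
  have hTp : cbar p ≤ Sval n Γ cbar chat I' γ₀ p := by
    have h := le_ciSup (Set.Finite.bddAbove (Set.finite_range _))
      (⟨γ₀, hγ₀card, fun i _ => rfl⟩ : {δ : Fin n → Bool //
        (Finset.univ.filter (fun i => δ i = true)).card ≤ Γ ∧ ∀ i ∈ I', δ i = γ₀ i})
      (f := fun δ : {δ : Fin n → Bool //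
        (Finset.univ.filter (fun i => δ i = true)).card ≤ Γ ∧ ∀ i ∈ I', δ i = γ₀ i} =>
        cbar p + (if δ.1 p = true then chat p else 0))
    simpa [hγ₀p, Sval] using h
  have hTj : ∀ j' : Fin n, j' ≠ p → cbar j' + chat j' ≤ Sval n Γ cbar chat I' γ₀ j' := by
    intro j' hj'
    set δ' : Fin n → Bool := fun i => γ₀ i || decide (i = j') with hδ'
    have hδ'filter : Finset.univ.filter (fun i => δ' i = true) =
        insert j' (I'.erase p) := by
      ext i
      simp only [hδ', Finset.mem_filter, Finset.mem_univ, true_and, Bool.or_eq_true,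
        decide_eq_true_eq, Finset.mem_insert, hγ₀, Finset.mem_erase]
      tauto
    have hδ'card : (Finset.univ.filter (fun i => δ' i = true)).card ≤ Γ := by
      rw [hδ'filter]
      calc (insert j' (I'.erase p)).card ≤ (I'.erase p).card + 1 := Finset.card_insert_le _ _
        _ ≤ Γ := by
          rw [Finset.card_erase_of_mem (Finset.max'_mem I' hI'ne), hI']; omega
    have hδ'agree : ∀ i ∈ I', δ' i = γ₀ i := by
      intro i hi
      by_cases hij : i = j'
      · subst hij
        simp [hδ', hγ₀, hi, hj']
      · simp [hδ', hij]
    have hδ'j : δ' j' = true := by simp [hδ']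
    have h := le_ciSup (Set.Finite.bddAbove (Set.finite_range _))
      (⟨δ', hδ'card, hδ'agree⟩ : {δ : Fin n → Bool //
        (Finset.univ.filter (fun i => δ i = true)).card ≤ Γ ∧ ∀ i ∈ I', δ i = γ₀ i})
      (f := fun δ : {δ : Fin n → Bool //
        (Finset.univ.filter (fun i => δ i = true)).card ≤ Γ ∧ ∀ i ∈ I', δ i = γ₀ i} =>
        cbar j' + (if δ.1 j' = true then chat j' else 0))
    simpa [hδ'j, Sval] using h
  -- Step 2: Psi I ≤ ⨅ j, Sval I' γ₀ j
  have hstep2 : Psi n Γ cbar chat I ≤ ⨅ j : Fin n, Sval n Γ cbar chat I' γ₀ j := by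
    rw [Psi_eq]
    haveI : Nonempty {γ : Fin n → Bool //
        (Finset.univ.filter (fun i => γ i = true)).card ≤ Γ} :=
      ⟨⟨fun _ => false, by simp⟩⟩
    refine ciSup_le fun γ => le_ciInf fun j' => ?_
    by_cases hj' : j' = p
    · subst hj'
      by_cases hall : ∀ i ∈ I, γ.1 i = true
      · -- use j = m
        refine le_trans (ciInf_le (Set.Finite.bddBelow (Set.finite_range _)) m) ?_
        refine le_trans ?_ (le_trans (hmono hmp) hTp)
        refine ciSup_le fun δ => ?_
        have hIsub : I ⊆ Finset.univ.filter (fun i => δ.1 i = true) := by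
          intro i hi
          simp only [Finset.mem_filter, Finset.mem_univ, true_and]
          rw [δ.2.2 i hi]
          exact hall i hi
        have heq : I = Finset.univ.filter (fun i => δ.1 i = true) :=
          Finset.eq_of_subset_of_card_le hIsub (by rw [hI]; exact δ.2.1)
        have hδm : δ.1 m ≠ true := by
          intro hmem
          apply hmI
          rw [heq]
          simp [hmem]
        simp [hδm]
      · push_neg at hall
        obtain ⟨i₀, hi₀I, hi₀⟩ := hall
        refine le_trans (ciInf_le (Set.Finite.bddBelow (Set.finite_range _)) i₀) ?_
        have hi₀p : i₀ ≤ p := le_of_lt (lt_of_le_of_lt (Finset.le_max' I i₀ hi₀I) hqp)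
        refine le_trans ?_ (le_trans (hmono hi₀p) hTp)
        refine ciSup_le fun δ => ?_
        have hδi₀ : δ.1 i₀ ≠ true := by rw [δ.2.2 i₀ hi₀I]; exact hi₀
        simp [hδi₀]
    · refine le_trans (ciInf_le (Set.Finite.bddBelow (Set.finite_range _)) j') ?_
      refine le_trans ?_ (hTj j' hj')
      refine ciSup_le fun δ => ?_
      by_cases hδj : δ.1 j' = true
      · simp [hδj]
      · simp only [hδj, if_neg]
        simp [hchat j']
  -- Step 1: ⨅ j, Sval I' γ₀ j ≤ Psi I'
  have hstep1 : (⨅ j : Fin n, Sval n Γ cbar chat I' γ₀ j) ≤ Psi n Γ cbar chat I' := by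
    rw [Psi_eq]
    exact le_ciSup (Set.Finite.bddAbove (Set.finite_range _))
      (f := fun γ : {γ : Fin n → Bool //
        (Finset.univ.filter (fun i => γ i = true)).card ≤ Γ} =>
        ⨅ j : Fin n, Sval n Γ cbar chat I' γ.1 j)
      (⟨γ₀, hγ₀card⟩ : {γ : Fin n → Bool //
        (Finset.univ.filter (fun i => γ i = true)).card ≤ Γ})
  exact le_trans hstep2 hstep1
end

section
/- For any query set I and any γ ∈ Δ^Γ with ∑_{i∈I} γ_i = Γ (full budget spent on queried items), the inner value min_{j∈[n]} max_{δ ∈ Δ^Γ(I,γ)} (c̄_j + δ_j ĉ_j) equals min{ min_{j∈[n]} (c̄_j + ĉ_j), min_{j ∈ [n]\I} c̄_j, min_{j ∈ I, γ_j = 0} c̄_j } (with the convention that a minimum over an empty set is +∞). -/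
open Finset

/-- The inner value `min_j max_{δ ∈ Δ^Γ(I,γ)} (c̄_j + δ_j ĉ_j)`, valued in `EReal`. -/
noncomputable def innerOU (n Γ : ℕ) (cbar chat : Fin n → ℝ) (I : Finset (Fin n))
    (γ : Fin n → Bool) : EReal :=
  ⨅ j : Fin n,
    ⨆ δ : {δ : Fin n → Bool //
        (Finset.univ.filter (fun i => δ i = true)).card ≤ Γ ∧ ∀ i ∈ I, δ i = γ i},
      ((cbar j + (if δ.1 j = true then chat j else 0) : ℝ) : EReal)

theorem stmt7 (n Γ : ℕ) (hn : 0 < n) (hΓ : 1 ≤ Γ) (cbar chat : Fin n → ℝ)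
    (hchat : ∀ j, 0 ≤ chat j) (I : Finset (Fin n)) (γ : Fin n → Bool)
    (hγ : (Finset.univ.filter (fun i => γ i = true)).card ≤ Γ)
    (hγI : (I.filter (fun i => γ i = true)).card = Γ) :
    innerOU n Γ cbar chat I γ =
      min
        (min
          (⨅ j : Fin n, ((cbar j + chat j : ℝ) : EReal))
          (⨅ j ∈ Iᶜ, ((cbar j : ℝ) : EReal)))
        (⨅ j ∈ I.filter (fun i => γ i = false), ((cbar j : ℝ) : EReal)) := by
  classical
  set δst : Fin n → Bool := fun j => if j ∈ I then γ j else false with hδstdef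
  have hfeas : (Finset.univ.filter (fun i => δst i = true)).card ≤ Γ ∧
      ∀ i ∈ I, δst i = γ i := by
    constructor
    · have heq : (Finset.univ.filter (fun i => δst i = true))
          = I.filter (fun i => γ i = true) := by
        ext j
        by_cases hj : j ∈ I <;> simp [δst, hj]
      rw [heq, hγI]
    · intro i hi; simp [δst, hi]
  have huniq : ∀ δ : Fin n → Bool,
      (Finset.univ.filter (fun i => δ i = true)).card ≤ Γ →
      (∀ i ∈ I, δ i = γ i) → ∀ j, δ j = δst j := by
    intro δ hcard hagree j
    by_cases hj : j ∈ I
    · simp [δst, hj, hagree j hj]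
    · simp only [δst, if_neg hj]
      by_contra h
      have hδj : δ j = true := by
        cases hδ : δ j
        · exact absurd hδ h
        · rfl
      have hsub : insert j (I.filter (fun i => γ i = true)) ⊆
          Finset.univ.filter (fun i => δ i = true) := by
        intro x hx
        rcases Finset.mem_insert.mp hx with rfl | hx
        · simp [hδj]
        · rcases Finset.mem_filter.mp hx with ⟨hxI, hxγ⟩
          simp [hagree x hxI, hxγ]
      have hcard2 := Finset.card_le_card hsub
      rw [Finset.card_insert_of_notMem (by
        intro hmem
        exact hj (Finset.mem_filter.mp hmem).1), hγI] at hcard2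
      omega
  -- compute the iSup for each j
  have hsup : ∀ j : Fin n,
      (⨆ δ : {δ : Fin n → Bool //
          (Finset.univ.filter (fun i => δ i = true)).card ≤ Γ ∧ ∀ i ∈ I, δ i = γ i},
        ((cbar j + (if δ.1 j = true then chat j else 0) : ℝ) : EReal))
      = ((cbar j + (if δst j = true then chat j else 0) : ℝ) : EReal) := by
    intro j
    apply le_antisymm
    · apply iSup_le
      rintro ⟨δ, hcard, hagree⟩
      simp only [huniq δ hcard hagree j]
      exact le_rfl
    · exact le_iSup_of_le ⟨δst, hfeas⟩ le_rfl
  have hLHS : innerOU n Γ cbar chat I γ =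
      ⨅ j : Fin n, ((cbar j + (if δst j = true then chat j else 0) : ℝ) : EReal) := by
    unfold innerOU
    exact iInf_congr hsup
  rw [hLHS]
  apply le_antisymm
  · refine le_min (le_min ?_ ?_) ?_
    · apply le_iInf
      intro j
      refine le_trans (iInf_le _ j) ?_
      apply EReal.coe_le_coe_iff.mpr
      by_cases h : δst j = true
      · rw [if_pos h]
      · rw [if_neg h]; linarith [hchat j]
    · apply le_iInf₂
      intro j hj
      refine le_trans (iInf_le _ j) ?_
      have hjI : j ∉ I := by simpa using hj
      simp [δst, hjI]
    · apply le_iInf₂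
      intro j hj
      rcases Finset.mem_filter.mp hj with ⟨hjI, hjγ⟩
      refine le_trans (iInf_le _ j) ?_
      simp [δst, hjI, hjγ]
  · apply le_iInf
    intro j
    by_cases hjI : j ∈ I
    · cases hγj : γ j
      · refine le_trans (min_le_right _ _) ?_
        refine le_trans (iInf₂_le j ?_) ?_
        · exact Finset.mem_filter.mpr ⟨hjI, hγj⟩
        · simp [δst, hjI, hγj]
      · refine le_trans (min_le_left _ _) (le_trans (min_le_left _ _) ?_)
        refine le_trans (iInf_le _ j) ?_
        simp [δst, hjI, hγj]
    · refine le_trans (min_le_left _ _) (le_trans (min_le_right _ _) ?_)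
      refine le_trans (iInf₂_le j (by simpa using hjI)) ?_
      simp [δst, hjI]
end

section
/- For any query set I and any γ ∈ Δ^Γ with ∑_{i∈I} γ_i < Γ (some budget left for unobserved items), the inner value min_{j∈[n]} max_{δ ∈ Δ^Γ(I,γ)} (c̄_j + δ_j ĉ_j) equals min{ min_{j∈[n]} (c̄_j + ĉ_j), min_{j ∈ I, γ_j = 0} c̄_j } (minimum over empty set is +∞). -/
open Finset

theorem stmt8 (n Γ : ℕ) (hn : 0 < n) (hΓ : 1 ≤ Γ) (cbar chat : Fin n → ℝ)
    (hchat : ∀ j, 0 ≤ chat j) (I : Finset (Fin n)) (γ : Fin n → Bool)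
    (hγ : (Finset.univ.filter (fun i => γ i = true)).card ≤ Γ)
    (hγI : (I.filter (fun i => γ i = true)).card < Γ) :
    innerOU n Γ cbar chat I γ =
      min
        (⨅ j : Fin n, ((cbar j + chat j : ℝ) : EReal))
        (⨅ j ∈ I.filter (fun i => γ i = false), ((cbar j : ℝ) : EReal)) := by
  classical
  set g : Fin n → ℝ := fun j => if j ∈ I ∧ γ j = false then cbar j else cbar j + chat j with hg
  -- the base candidate δ0
  set δ0 : Fin n → Bool := fun i => γ i && decide (i ∈ I) with hδ0
  have hδ0feas : (Finset.univ.filter (fun i => δ0 i = true)).card ≤ Γ ∧ ∀ i ∈ I, δ0 i = γ i := by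
    constructor
    · refine le_trans (Finset.card_le_card ?_) hγ
      intro i hi
      simp only [hδ0, Finset.mem_filter, Bool.and_eq_true, decide_eq_true_eq] at hi ⊢
      exact ⟨hi.1, hi.2.1⟩
    · intro i hi
      simp [hδ0, hi]
  have hfilter : Finset.univ.filter (fun i => δ0 i = true) = I.filter (fun i => γ i = true) := by
    ext i
    simp only [hδ0, Finset.mem_filter, Bool.and_eq_true, decide_eq_true_eq, Finset.mem_univ,
      true_and]
    tauto
  have hsup : ∀ j : Fin n,
      (⨆ δ : {δ : Fin n → Bool //
        (Finset.univ.filter (fun i => δ i = true)).card ≤ Γ ∧ ∀ i ∈ I, δ i = γ i},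
      ((cbar j + (if δ.1 j = true then chat j else 0) : ℝ) : EReal)) = (g j : EReal) := by
    intro j
    apply le_antisymm
    · apply iSup_le
      rintro ⟨δ, hδcard, hδI⟩
      simp only [hg]
      by_cases hj : j ∈ I ∧ γ j = false
      · have hδj : δ j = false := by rw [hδI j hj.1, hj.2]
        simp [hj, hδj]
      · rw [if_neg hj]
        apply EReal.coe_le_coe_iff.mpr
        split
        · exact le_refl _
        · linarith [hchat j]
    · by_cases hj : j ∈ I ∧ γ j = false
      · refine le_iSup_of_le ⟨δ0, hδ0feas⟩ ?_
        have : δ0 j = false := by simp [hδ0, hj.2]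
        simp [this, hg, hj]
      · by_cases hjI : j ∈ I
        · have hγj : γ j = true := by
            rcases Bool.eq_false_or_eq_true (γ j) with h | h
            · exact h
            · exact absurd ⟨hjI, h⟩ hj
          refine le_iSup_of_le ⟨δ0, hδ0feas⟩ ?_
          have : δ0 j = true := by simp [hδ0, hγj, hjI]
          simp [this, hg, hj]
        · -- j ∉ I: we can afford to raise j
          set δ1 : Fin n → Bool := fun i => (γ i && decide (i ∈ I)) || decide (i = j) with hδ1
          have hδ1feas : (Finset.univ.filter (fun i => δ1 i = true)).card ≤ Γ ∧
              ∀ i ∈ I, δ1 i = γ i := by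
            constructor
            · have hsub : Finset.univ.filter (fun i => δ1 i = true) ⊆
                  insert j (I.filter (fun i => γ i = true)) := by
                intro i hi
                simp only [hδ1, Finset.mem_filter, Bool.or_eq_true, Bool.and_eq_true,
                  decide_eq_true_eq, Finset.mem_univ, true_and] at hi
                rcases hi with ⟨h1, h2⟩ | h
                · exact Finset.mem_insert_of_mem (Finset.mem_filter.mpr ⟨h2, h1⟩)
                · simp [h]
              refine le_trans (Finset.card_le_card hsub) ?_
              refine le_trans (Finset.card_insert_le _ _) ?_
              omega
            · intro i hi
              have : i ≠ j := fun h => hjI (h ▸ hi)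
              simp [hδ1, hi, this]
          refine le_iSup_of_le ⟨δ1, hδ1feas⟩ ?_
          have : δ1 j = true := by simp [hδ1]
          simp [this, hg, hj]
  rw [innerOU]
  simp only [hsup]
  apply le_antisymm
  · apply le_min
    · refine iInf_mono fun j => ?_
      apply EReal.coe_le_coe_iff.mpr
      simp only [hg]
      split
      · linarith [hchat j]
      · exact le_refl _
    · refine le_iInf₂ fun j hj => ?_
      refine iInf_le_of_le j ?_
      simp only [Finset.mem_filter] at hj
      simp [hg, hj.1, hj.2]
  · refine le_iInf fun j => ?_
    by_cases hj : j ∈ I ∧ γ j = false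
    · refine le_trans (min_le_right _ _) ?_
      refine le_trans (iInf₂_le j (Finset.mem_filter.mpr ⟨hj.1, hj.2⟩)) ?_
      simp [hg, hj]
    · refine le_trans (min_le_left _ _) ?_
      refine le_trans (iInf_le _ j) ?_
      simp [hg, hj]
end

section
/- If c̄ is non-decreasing, then max_{δ ∈ Δ^Γ} min_{j ∈ [n]} (c̄_j + δ_j ĉ_j) = min{ min_{j ∈ [Γ]} (c̄_j + ĉ_j), c̄_{Γ+1} } when Γ < n, where the maximum is attained by attacking the Γ items with smallest nominal cost. -/
open Finset

theorem stmt10 (n Γ : ℕ) (hΓ : 1 ≤ Γ) (hΓn : Γ < n) (cbar chat : Fin n → ℝ)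
    (hchat : ∀ j, 0 ≤ chat j) (hmono : Monotone cbar) :
    (⨆ δ : {δ : Fin n → Bool // (Finset.univ.filter (fun i => δ i = true)).card ≤ Γ},
      Finset.univ.inf'
        (Finset.univ_nonempty_iff.mpr (Fin.pos_iff_nonempty.mp (by omega)))
        (fun j => cbar j + (if δ.1 j = true then chat j else 0))) =
    min
      ((Finset.univ.filter (fun i : Fin n => (i : ℕ) < Γ)).inf'
        ⟨⟨0, by omega⟩, by
          simp only [Finset.mem_filter, Finset.mem_univ, true_and]; omega⟩
        (fun j => cbar j + chat j))
      (cbar ⟨Γ, hΓn⟩) := by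
  have hn : 0 < n := by omega
  set S := {δ : Fin n → Bool // (Finset.univ.filter (fun i => δ i = true)).card ≤ Γ}
  have hne : Nonempty S := ⟨⟨fun _ => false, by simp⟩⟩
  set f : S → ℝ := fun δ =>
      Finset.univ.inf'
        (Finset.univ_nonempty_iff.mpr (Fin.pos_iff_nonempty.mp (by omega)))
        (fun j => cbar j + (if δ.1 j = true then chat j else 0)) with hf
  set A : ℝ := (Finset.univ.filter (fun i : Fin n => (i : ℕ) < Γ)).inf'
        ⟨⟨0, by omega⟩, by
          simp only [Finset.mem_filter, Finset.mem_univ, true_and]; omega⟩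
        (fun j => cbar j + chat j) with hA
  apply le_antisymm
  · apply ciSup_le
    intro δ
    apply le_min
    · -- f δ ≤ A : f δ is below every term cbar j + chat j for j < Γ
      apply Finset.le_inf'
      intro j hj
      refine le_trans (Finset.inf'_le _ (Finset.mem_univ j)) ?_
      by_cases h : δ.1 j = true
      · simp [h]
      · simp [h, hchat j]
    · -- f δ ≤ cbar Γ : some j ≤ Γ with δ j = false
      have : ∃ j : Fin n, (j : ℕ) ≤ Γ ∧ δ.1 j = false := by
        by_contra hcon
        push_neg at hcon
        have hsub : Finset.Iic (⟨Γ, hΓn⟩ : Fin n) ⊆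
            Finset.univ.filter (fun i => δ.1 i = true) := by
          intro i hi
          simp only [Finset.mem_Iic, Fin.le_def] at hi
          simp only [Finset.mem_filter, Finset.mem_univ, true_and]
          have := hcon i hi
          revert this
          cases δ.1 i <;> simp
        have hcard := Finset.card_le_card hsub
        rw [Fin.card_Iic] at hcard
        simp only [Fin.val_mk] at hcard
        have := δ.2
        omega
      obtain ⟨j, hjΓ, hjf⟩ := this
      refine le_trans (Finset.inf'_le _ (Finset.mem_univ j)) ?_
      simp only [hjf]
      simp only [Bool.false_eq_true, if_false, add_zero]
      exact hmono (by simpa [Fin.le_def] using hjΓ)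
  · -- RHS ≤ f δ* ≤ sup
    set δs : S := ⟨fun i => decide ((i : ℕ) < Γ), by
      have hsub : Finset.univ.filter (fun i : Fin n => decide ((i : ℕ) < Γ) = true) ⊆
          Finset.Iio (⟨Γ, hΓn⟩ : Fin n) := by
        intro i hi
        simp only [Finset.mem_filter, decide_eq_true_eq] at hi
        simp [Finset.mem_Iio, Fin.lt_def, hi.2]
      have := Finset.card_le_card hsub
      rwa [Fin.card_Iio] at this⟩ with hδs
    have hbdd : BddAbove (Set.range f) := Set.Finite.bddAbove (Set.finite_range f)
    refine le_trans ?_ (le_ciSup hbdd δs)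
    apply Finset.le_inf'
    intro j _
    by_cases h : (j : ℕ) < Γ
    · simp only [hδs, decide_eq_true_eq, if_pos h]
      refine le_trans (min_le_left _ _) ?_
      exact Finset.inf'_le _ (by simp [h])
    · have : decide ((j : ℕ) < Γ) = false := by simp [h]
      simp only [hδs, this, Bool.false_eq_true, if_false, add_zero]
      refine le_trans (min_le_right _ _) ?_
      exact hmono (by simp [Fin.le_def]; omega)
end

section
/- Consider the p-selection DDID problem with constraint uncertainty: Φ(I) = max_{γ ∈ Δ^Γ} min { cᵀx : x ∈ {0,1}ⁿ, ∑x_i = p, δᵀx ≤ b for all δ ∈ Δ^Γ(I,γ) } (value +∞ if some inner problem is infeasible). Suppose n ≥ p + Q, p > b and Γ > b, where Q = max_{I∈𝓘}|I|. Then there exists I ∈ 𝓘 with Φ(I) < +∞ (the problem is feasible) if and only if both conditions Γ ≤ b + Q and p ≤ 2b + Q − Γ + 1 are satisfied. -/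
open Finset

/-- The DDID value of query set `I` for the p-selection problem with constraint
uncertainty, valued in `EReal` (`⊤` when the inner problem is infeasible). -/
noncomputable def Phi (n p b Γ : ℕ) (c : Fin n → ℝ) (I : Finset (Fin n)) : EReal :=
  ⨆ γ : {γ : Fin n → Bool // (Finset.univ.filter (fun i => γ i = true)).card ≤ Γ},
    sInf {v : EReal | ∃ x : Fin n → Bool,
      (Finset.univ.filter (fun i => x i = true)).card = p ∧
      (∀ δ : Fin n → Bool,
        (Finset.univ.filter (fun i => δ i = true)).card ≤ Γ →
        (∀ i ∈ I, δ i = γ.1 i) →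
        (Finset.univ.filter (fun i => δ i = true ∧ x i = true)).card ≤ b) ∧
      v = ((∑ i ∈ Finset.univ.filter (fun i => x i = true), c i : ℝ) : EReal)}

/-- Infeasibility construction: if `p + Γ ≥ 2b + Q + 2`, then for any query set `I`
with `|I| ≤ Q` there is a scenario `G` defeating every `X` of size `p`. -/
lemma inf_lemma {n : ℕ} (p b Γ Q : ℕ) (I : Finset (Fin n)) (hIQ : I.card ≤ Q)
    (hpb : b < p) (hΓb : b < Γ) (hbig : 2 * b + Q + 2 ≤ p + Γ) :
    ∃ G : Finset (Fin n), G.card ≤ Γ ∧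
      ∀ X : Finset (Fin n), X.card = p →
        ∃ D : Finset (Fin n), D.card ≤ Γ ∧ (∀ i ∈ I, (i ∈ D ↔ i ∈ G)) ∧
          b + 1 ≤ (D ∩ X).card := by
  set k := I.card with hk
  set s := min k (Γ - b - 1) with hs
  have hs1 : s ≤ k := min_le_left _ _
  have hs2 : s ≤ Γ - b - 1 := min_le_right _ _
  have hs3 : s = k ∨ s = Γ - b - 1 := min_choice _ _
  obtain ⟨S, hSI, hScard⟩ := Finset.exists_subset_card_eq hs1
  refine ⟨S, by omega, ?_⟩
  intro X hX
  set T := X \ I with hT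
  have ht1 : min T.card (b + 1) ≤ T.card := min_le_left _ _
  obtain ⟨T', hT'T, hT'card⟩ := Finset.exists_subset_card_eq ht1
  have hT'I : ∀ i ∈ T', i ∉ I := by
    intro i hi
    have := hT'T hi
    rw [hT, Finset.mem_sdiff] at this
    exact this.2
  refine ⟨S ∪ T', ?_, ?_, ?_⟩
  · have hc := Finset.card_union_le S T'
    have ht2 : min T.card (b + 1) ≤ b + 1 := min_le_right _ _
    omega
  · intro i hi
    simp only [Finset.mem_union]
    constructor
    · rintro (h | h)
      · exact h
      · exact absurd hi (hT'I i h)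
    · exact Or.inl
  · -- (S ∪ T') ∩ X = (S ∩ X) ∪ T'  (T' ⊆ X), disjoint union
    have hT'X : T' ⊆ X := hT'T.trans (Finset.sdiff_subset)
    have hunion : (S ∪ T') ∩ X = (S ∩ X) ∪ T' := by
      rw [Finset.union_inter_distrib_right, Finset.inter_eq_left.mpr hT'X]
    have hdisj : Disjoint (S ∩ X) T' := by
      rw [Finset.disjoint_left]
      intro i hi hi'
      exact hT'I i hi' (hSI (Finset.mem_inter.mp hi).1)
    rw [hunion, Finset.card_union_of_disjoint hdisj]
    -- arithmetic facts
    have e1 : (X ∩ I).card + (X \ I).card = X.card := Finset.card_inter_add_card_sdiff X I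
    have e2 : ((X ∩ I) ∩ S).card + ((X ∩ I) \ S).card = (X ∩ I).card :=
      Finset.card_inter_add_card_sdiff (X ∩ I) S
    have e3 : (X ∩ I) ∩ S = S ∩ X := by
      ext i
      simp only [Finset.mem_inter]
      constructor
      · rintro ⟨⟨h1, _⟩, h3⟩; exact ⟨h3, h1⟩
      · rintro ⟨h1, h2⟩; exact ⟨⟨h2, hSI h1⟩, h1⟩
    have e4 : (X ∩ I) \ S ⊆ I \ S := by
      intro i hi
      rw [Finset.mem_sdiff] at hi ⊢
      exact ⟨(Finset.mem_inter.mp hi.1).2, hi.2⟩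
    have e5 : ((X ∩ I) \ S).card ≤ (I \ S).card := Finset.card_le_card e4
    have e6 : (I \ S).card = k - s := by rw [Finset.card_sdiff_of_subset hSI, hScard]
    rw [e3] at e2
    have ht3 : min T.card (b + 1) = T.card ∨ min T.card (b + 1) = b + 1 := min_choice _ _
    rw [hT] at hT'card ht1 ht3
    omega

/-- Feasibility construction: if `p + Γ ≤ 2b + Q + 1` and `|I| = Q`, every scenario `G`
admits a robust selection `X` of size `p`. -/
lemma feas_lemma {n : ℕ} (p b Γ Q : ℕ) (I : Finset (Fin n)) (hIQ : I.card = Q)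
    (hn : p + Q ≤ n) (hpb : b < p) (hΓb : b < Γ) (hsmall : p + Γ ≤ 2 * b + Q + 1)
    (G : Finset (Fin n)) (hG : G.card ≤ Γ) :
    ∃ X : Finset (Fin n), X.card = p ∧
      ∀ D : Finset (Fin n), D.card ≤ Γ → (∀ i ∈ I, (i ∈ D ↔ i ∈ G)) →
        (D ∩ X).card ≤ b := by
  set S := I ∩ G with hS
  have hSI : S ⊆ I := Finset.inter_subset_left
  set s := S.card with hs
  have hsQ : s ≤ Q := hIQ ▸ Finset.card_le_card hSI
  have hIS : (I \ S).card = Q - s := by rw [Finset.card_sdiff_of_subset hSI, hIQ]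
  by_cases hc : p + s ≤ Q
  · -- put everything inside I \ S
    have hple : p ≤ (I \ S).card := by omega
    obtain ⟨X, hXsub, hXcard⟩ := Finset.exists_subset_card_eq hple
    refine ⟨X, hXcard, ?_⟩
    intro D _ hagree
    have : D ∩ X = ∅ := by
      rw [Finset.eq_empty_iff_forall_notMem]
      intro i hi
      rw [Finset.mem_inter] at hi
      have hiIS := hXsub hi.2
      rw [Finset.mem_sdiff] at hiIS
      have : i ∈ G := (hagree i hiIS.1).mp hi.1
      exact hiIS.2 (Finset.mem_inter.mpr ⟨hiIS.1, this⟩)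
    rw [this]
    simp
  · -- X = (I \ S) ∪ W with W outside I
    have hW : p + s - Q ≤ (Finset.univ \ I).card := by
      rw [Finset.card_sdiff_of_subset (Finset.subset_univ I), Finset.card_univ, Fintype.card_fin, hIQ]
      omega
    obtain ⟨W, hWsub, hWcard⟩ := Finset.exists_subset_card_eq hW
    have hWI : ∀ i ∈ W, i ∉ I := by
      intro i hi
      have := hWsub hi
      rw [Finset.mem_sdiff] at this
      exact this.2
    have hdisj : Disjoint (I \ S) W := by
      rw [Finset.disjoint_left]
      intro i hi hi'
      exact hWI i hi' (Finset.mem_sdiff.mp hi).1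
    refine ⟨(I \ S) ∪ W, ?_, ?_⟩
    · rw [Finset.card_union_of_disjoint hdisj, hIS, hWcard]
      omega
    · intro D hD hagree
      have hDIS : D ∩ (I \ S) = ∅ := by
        rw [Finset.eq_empty_iff_forall_notMem]
        intro i hi
        rw [Finset.mem_inter, Finset.mem_sdiff] at hi
        have : i ∈ G := (hagree i hi.2.1).mp hi.1
        exact hi.2.2 (Finset.mem_inter.mpr ⟨hi.2.1, this⟩)
      have hinter : D ∩ ((I \ S) ∪ W) = D ∩ W := by
        rw [Finset.inter_union_distrib_left, hDIS, Finset.empty_union]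
      rw [hinter]
      -- S ⊆ D and D ∩ W disjoint from S inside D
      have hSD : S ⊆ D := by
        intro i hi
        rw [hS, Finset.mem_inter] at hi
        exact (hagree i hi.1).mpr hi.2
      have hdisj2 : Disjoint S (D ∩ W) := by
        rw [Finset.disjoint_left]
        intro i hi hi'
        exact hWI i (Finset.mem_inter.mp hi').2 (hSI hi)
      have hsub : S ∪ (D ∩ W) ⊆ D := by
        intro i hi
        rcases Finset.mem_union.mp hi with h | h
        · exact hSD h
        · exact (Finset.mem_inter.mp h).1
      have h1 : s + (D ∩ W).card ≤ Γ := by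
        calc s + (D ∩ W).card = (S ∪ (D ∩ W)).card := (Finset.card_union_of_disjoint hdisj2).symm
          _ ≤ D.card := Finset.card_le_card hsub
          _ ≤ Γ := hD
      have h2 : (D ∩ W).card ≤ p + s - Q := hWcard ▸ Finset.card_le_card Finset.inter_subset_right
      omega

/-- `Phi` is finite iff every scenario admits a feasible solution. -/
lemma phi_lt_top (n p b Γ : ℕ) (c : Fin n → ℝ) (I : Finset (Fin n)) :
    Phi n p b Γ c I < ⊤ ↔
      ∀ γ : Fin n → Bool, (Finset.univ.filter (fun i => γ i = true)).card ≤ Γ →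
        ∃ x : Fin n → Bool, (Finset.univ.filter (fun i => x i = true)).card = p ∧
          (∀ δ : Fin n → Bool,
            (Finset.univ.filter (fun i => δ i = true)).card ≤ Γ →
            (∀ i ∈ I, δ i = γ i) →
            (Finset.univ.filter (fun i => δ i = true ∧ x i = true)).card ≤ b) := by
  unfold Phi
  constructor
  · intro h γ hγ
    have h1 : sInf {v : EReal | ∃ x : Fin n → Bool,
        (Finset.univ.filter (fun i => x i = true)).card = p ∧
        (∀ δ : Fin n → Bool,
          (Finset.univ.filter (fun i => δ i = true)).card ≤ Γ →
          (∀ i ∈ I, δ i = γ i) →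
          (Finset.univ.filter (fun i => δ i = true ∧ x i = true)).card ≤ b) ∧
        v = ((∑ i ∈ Finset.univ.filter (fun i => x i = true), c i : ℝ) : EReal)} < ⊤ :=
      lt_of_le_of_lt (le_iSup (fun γ' :
          {γ : Fin n → Bool // (Finset.univ.filter (fun i => γ i = true)).card ≤ Γ} =>
        sInf {v : EReal | ∃ x : Fin n → Bool,
          (Finset.univ.filter (fun i => x i = true)).card = p ∧
          (∀ δ : Fin n → Bool,
            (Finset.univ.filter (fun i => δ i = true)).card ≤ Γ →
            (∀ i ∈ I, δ i = γ'.1 i) →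
            (Finset.univ.filter (fun i => δ i = true ∧ x i = true)).card ≤ b) ∧
          v = ((∑ i ∈ Finset.univ.filter (fun i => x i = true), c i : ℝ) : EReal)})
        ⟨γ, hγ⟩) h
    by_contra hx
    have hempty : {v : EReal | ∃ x : Fin n → Bool,
        (Finset.univ.filter (fun i => x i = true)).card = p ∧
        (∀ δ : Fin n → Bool,
          (Finset.univ.filter (fun i => δ i = true)).card ≤ Γ →
          (∀ i ∈ I, δ i = γ i) →
          (Finset.univ.filter (fun i => δ i = true ∧ x i = true)).card ≤ b) ∧
        v = ((∑ i ∈ Finset.univ.filter (fun i => x i = true), c i : ℝ) : EReal)} = ∅ := by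
      rw [Set.eq_empty_iff_forall_notMem]
      rintro v ⟨x, hx1, hx2, _⟩
      exact hx ⟨x, hx1, hx2⟩
    rw [hempty, sInf_empty] at h1
    exact lt_irrefl ⊤ h1
  · intro h
    refine lt_of_le_of_lt (iSup_le ?_) (EReal.coe_lt_top (∑ i, |c i|))
    rintro ⟨γ, hγ⟩
    obtain ⟨x, hx1, hx2⟩ := h γ hγ
    refine sInf_le_of_le ⟨x, hx1, hx2, rfl⟩ ?_
    rw [EReal.coe_le_coe_iff]
    calc ∑ i ∈ Finset.univ.filter (fun i => x i = true), c i
        ≤ ∑ i ∈ Finset.univ.filter (fun i => x i = true), |c i| :=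
          Finset.sum_le_sum (fun i _ => le_abs_self _)
      _ ≤ ∑ i, |c i| :=
          Finset.sum_le_sum_of_subset_of_nonneg (Finset.subset_univ _)
            (fun i _ _ => abs_nonneg _)

theorem stmt14 (n p b Γ Q : ℕ) (c : Fin n → ℝ) (𝓘 : Set (Finset (Fin n)))
    (hdc : ∀ I ∈ 𝓘, ∀ J ⊆ I, J ∈ 𝓘)
    (hQmem : ∃ I ∈ 𝓘, I.card = Q)
    (hQmax : ∀ I ∈ 𝓘, I.card ≤ Q)
    (hn : p + Q ≤ n) (hpb : b < p) (hΓb : b < Γ) :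
    (∃ I ∈ 𝓘, Phi n p b Γ c I < ⊤) ↔ (Γ ≤ b + Q ∧ p + Γ ≤ 2 * b + Q + 1) := by
  constructor
  · rintro ⟨I, hI, hPhi⟩
    by_contra hcon
    have hbig : 2 * b + Q + 2 ≤ p + Γ := by
      by_contra h2
      exact hcon (by omega)
    obtain ⟨G, hG, hbad⟩ := inf_lemma p b Γ Q I (hQmax I hI) hpb hΓb hbig
    set γ : Fin n → Bool := fun i => decide (i ∈ G) with hγdef
    have hfilterγ : Finset.univ.filter (fun i => γ i = true) = G := by
      ext i; simp [hγdef]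
    obtain ⟨x, hxcard, hxcon⟩ := (phi_lt_top n p b Γ c I).mp hPhi γ (by rw [hfilterγ]; exact hG)
    set X := Finset.univ.filter (fun i => x i = true) with hXdef
    obtain ⟨D, hD1, hD2, hD3⟩ := hbad X hxcard
    set δ : Fin n → Bool := fun i => decide (i ∈ D) with hδdef
    have hfilterδ : Finset.univ.filter (fun i => δ i = true) = D := by
      ext i; simp [hδdef]
    have hover : Finset.univ.filter (fun i => δ i = true ∧ x i = true) = D ∩ X := by
      ext i; simp [hδdef, hXdef]
    have hle : (D ∩ X).card ≤ b := by
      rw [← hover]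
      apply hxcon δ (by rw [hfilterδ]; exact hD1)
      intro i hi
      simp only [hδdef, hγdef]
      exact decide_eq_decide.mpr (hD2 i hi)
    omega
  · rintro ⟨h1, h2⟩
    obtain ⟨I₀, hI₀𝓘, hI₀card⟩ := hQmem
    refine ⟨I₀, hI₀𝓘, (phi_lt_top n p b Γ c I₀).mpr ?_⟩
    intro γ hγ
    obtain ⟨X, hXcard, hXgood⟩ := feas_lemma p b Γ Q I₀ hI₀card hn hpb hΓb h2
      (Finset.univ.filter (fun i => γ i = true)) hγ
    refine ⟨fun i => decide (i ∈ X), ?_, ?_⟩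
    · have : Finset.univ.filter (fun i => decide (i ∈ X) = true) = X := by
        ext i; simp
      rw [this]; exact hXcard
    · intro δ hδ hagree
      have hover : Finset.univ.filter (fun i => δ i = true ∧ decide (i ∈ X) = true) =
          (Finset.univ.filter (fun i => δ i = true)) ∩ X := by
        ext i; simp
      rw [hover]
      apply hXgood _ hδ
      intro i hi
      have := hagree i hi
      simp only [Finset.mem_filter, Finset.mem_univ, true_and, this]
end

section
/- In the constraint-uncertainty DDID selection problem with selection query sets (any I with |I| ≤ q is allowed), assume c is non-decreasing, n ≥ p + q, p > b, b + 1 ≤ Γ ≤ b + q, and p ≤ 2b + q − Γ + 1. Then the query set I* = {b+1, b+2, ..., b+q} is optimal, and the optimal value equals ∑_{i=1}^{b} c_i + ∑_{i=Γ+1}^{p−b+Γ} c_i. -/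
open Finset

lemma card_filter_lt_le {n : ℕ} (k : ℕ) :
    (Finset.univ.filter fun i : Fin n => (i : ℕ) < k).card ≤ k := by
  classical
  have h : ((Finset.univ.filter fun i : Fin n => (i : ℕ) < k).image Fin.val) ⊆ Finset.range k := by
    intro a ha; simp only [mem_image, mem_filter, mem_range] at ha ⊢
    obtain ⟨i, ⟨-, hi⟩, rfl⟩ := ha; exact hi
  calc (Finset.univ.filter fun i : Fin n => (i : ℕ) < k).card
      = ((Finset.univ.filter fun i : Fin n => (i : ℕ) < k).image Fin.val).card :=
        (Finset.card_image_of_injective _ Fin.val_injective).symm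
    _ ≤ (Finset.range k).card := Finset.card_le_card h
    _ = k := Finset.card_range k

lemma card_filter_lt_eq {n : ℕ} {k : ℕ} (hk : k ≤ n) :
    (Finset.univ.filter fun i : Fin n => (i : ℕ) < k).card = k := by
  classical
  have h : ((Finset.univ.filter fun i : Fin n => (i : ℕ) < k).image Fin.val) = Finset.range k := by
    ext a; simp only [mem_image, mem_filter, mem_range, mem_univ, true_and]
    constructor
    · rintro ⟨i, hi, rfl⟩; exact hi
    · intro ha; exact ⟨⟨a, lt_of_lt_of_le ha hk⟩, ha, rfl⟩
  calc (Finset.univ.filter fun i : Fin n => (i : ℕ) < k).card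
      = ((Finset.univ.filter fun i : Fin n => (i : ℕ) < k).image Fin.val).card :=
        (Finset.card_image_of_injective _ Fin.val_injective).symm
    _ = k := by rw [h, Finset.card_range]

lemma card_filter_ico_eq {n : ℕ} {lo hi : ℕ} (hlo : lo ≤ hi) (hk : hi ≤ n) :
    (Finset.univ.filter fun i : Fin n => lo ≤ (i : ℕ) ∧ (i : ℕ) < hi).card = hi - lo := by
  classical
  have h : ((Finset.univ.filter fun i : Fin n => lo ≤ (i : ℕ) ∧ (i : ℕ) < hi).image Fin.val)
      = Finset.Ico lo hi := by
    ext a; simp only [mem_image, mem_filter, mem_Ico, mem_univ, true_and]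
    constructor
    · rintro ⟨i, hi, rfl⟩; exact hi
    · intro ha; exact ⟨⟨a, lt_of_lt_of_le ha.2 hk⟩, ha, rfl⟩
  calc (Finset.univ.filter fun i : Fin n => lo ≤ (i : ℕ) ∧ (i : ℕ) < hi).card
      = ((Finset.univ.filter fun i : Fin n => lo ≤ (i : ℕ) ∧ (i : ℕ) < hi).image Fin.val).card :=
        (Finset.card_image_of_injective _ Fin.val_injective).symm
    _ = hi - lo := by rw [h, Nat.card_Ico]

lemma orderEmb_le_of_prefix {n p : ℕ} {A B : Finset (Fin n)} (hA : A.card = p) (hB : B.card = p)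
    (h : ∀ k : ℕ, (A.filter fun i : Fin n => (i:ℕ) < k).card ≤ (B.filter fun i : Fin n => (i:ℕ) < k).card)
    (j : Fin p) : B.orderEmbOfFin hB j ≤ A.orderEmbOfFin hA j := by
  classical
  by_contra hlt
  push_neg at hlt
  set k : ℕ := (A.orderEmbOfFin hA j : ℕ) + 1 with hk
  have hlow : (j : ℕ) + 1 ≤ (A.filter fun i : Fin n => (i:ℕ) < k).card := by
    have hsub : (Finset.univ.filter fun j' : Fin p => (j' : ℕ) < (j : ℕ) + 1).image
        (A.orderEmbOfFin hA) ⊆ A.filter fun i : Fin n => (i:ℕ) < k := by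
      intro i hi
      simp only [mem_image, mem_filter, mem_univ, true_and] at hi ⊢
      obtain ⟨j', hj', rfl⟩ := hi
      refine ⟨Finset.orderEmbOfFin_mem _ _ _, ?_⟩
      have h4 : A.orderEmbOfFin hA j' ≤ A.orderEmbOfFin hA j :=
        (A.orderEmbOfFin hA).monotone (Fin.le_def.mpr (by omega))
      have h5 := Fin.le_def.mp h4
      omega
    have hcard : ((Finset.univ.filter fun j' : Fin p => (j' : ℕ) < (j : ℕ) + 1).image
        (A.orderEmbOfFin hA)).card = (j : ℕ) + 1 := by
      rw [Finset.card_image_of_injective _ (A.orderEmbOfFin hA).injective,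
        card_filter_lt_eq (by omega)]
    calc (j : ℕ) + 1 = _ := hcard.symm
      _ ≤ _ := Finset.card_le_card hsub
  have hup : (B.filter fun i : Fin n => (i:ℕ) < k).card ≤ (j : ℕ) := by
    have hsub : (B.filter fun i : Fin n => (i:ℕ) < k) ⊆
        (Finset.univ.filter fun j' : Fin p => (j' : ℕ) < (j : ℕ)).image (B.orderEmbOfFin hB) := by
      intro i hi
      simp only [mem_filter] at hi
      have : i ∈ Set.range (B.orderEmbOfFin hB) := by
        rw [Finset.range_orderEmbOfFin]; exact hi.1
      obtain ⟨j', rfl⟩ := this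
      have hj' : (j' : ℕ) < (j : ℕ) := by
        by_contra hge
        push_neg at hge
        have h1 : B.orderEmbOfFin hB j ≤ B.orderEmbOfFin hB j' :=
          (B.orderEmbOfFin hB).monotone (Fin.le_def.mpr hge)
        have h1' := Fin.le_def.mp h1
        have h2 := hi.2
        have h3 : (A.orderEmbOfFin hA j : ℕ) < (B.orderEmbOfFin hB j : ℕ) := Fin.lt_def.mp hlt
        omega
      simp only [mem_image, mem_filter, mem_univ, true_and]
      exact ⟨j', hj', rfl⟩
    calc (B.filter fun i : Fin n => (i:ℕ) < k).card ≤ _ := Finset.card_le_card hsub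
      _ ≤ (j : ℕ) := by
        rw [Finset.card_image_of_injective _ (B.orderEmbOfFin hB).injective]
        exact le_of_eq (card_filter_lt_eq (by omega))
  have := h k
  omega

lemma sum_le_of_prefix {n p : ℕ} {c : Fin n → ℝ} (hmono : Monotone c)
    {A B : Finset (Fin n)} (hA : A.card = p) (hB : B.card = p)
    (h : ∀ k : ℕ, (A.filter fun i : Fin n => (i:ℕ) < k).card ≤ (B.filter fun i : Fin n => (i:ℕ) < k).card) :
    ∑ i ∈ B, c i ≤ ∑ i ∈ A, c i := by
  classical
  have himgB : Finset.image (B.orderEmbOfFin hB) Finset.univ = B := by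
    ext i
    simp only [mem_image, mem_univ, true_and]
    rw [← Finset.mem_coe, ← Finset.range_orderEmbOfFin B hB]
    exact ⟨fun ⟨j, hj⟩ => ⟨j, hj⟩, fun ⟨j, hj⟩ => ⟨j, hj⟩⟩
  have himgA : Finset.image (A.orderEmbOfFin hA) Finset.univ = A := by
    ext i
    simp only [mem_image, mem_univ, true_and]
    rw [← Finset.mem_coe, ← Finset.range_orderEmbOfFin A hA]
    exact ⟨fun ⟨j, hj⟩ => ⟨j, hj⟩, fun ⟨j, hj⟩ => ⟨j, hj⟩⟩
  rw [← himgB, ← himgA, Finset.sum_image (fun a _ b _ hab => (B.orderEmbOfFin hB).injective hab),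
    Finset.sum_image (fun a _ b _ hab => (A.orderEmbOfFin hA).injective hab)]
  exact Finset.sum_le_sum fun j _ => hmono (orderEmb_le_of_prefix hA hB h j)

lemma exists_smallest_subset {n : ℕ} (F : Finset (Fin n)) {k : ℕ} (hk : k ≤ F.card) :
    ∃ E, E ⊆ F ∧ E.card = k ∧
      ∀ i ∈ E, (F.filter fun j : Fin n => (j:ℕ) < (i:ℕ)).card < k := by
  classical
  set e := F.orderEmbOfFin rfl with he
  refine ⟨Finset.image e (Finset.univ.filter fun j : Fin F.card => (j:ℕ) < k), ?_, ?_, ?_⟩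
  · intro i hi
    simp only [mem_image] at hi
    obtain ⟨j, -, rfl⟩ := hi
    exact Finset.orderEmbOfFin_mem _ _ _
  · rw [Finset.card_image_of_injective _ e.injective, card_filter_lt_eq hk]
  · intro i hi
    simp only [mem_image, mem_filter, mem_univ, true_and] at hi
    obtain ⟨j, hj, rfl⟩ := hi
    have hsub : (F.filter fun i' : Fin n => (i':ℕ) < ((e j : Fin n):ℕ)) ⊆
        Finset.image e (Finset.univ.filter fun j' : Fin F.card => (j':ℕ) < (j:ℕ)) := by
      intro i' hi'
      simp only [mem_filter] at hi'
      have : i' ∈ Set.range e := by rw [he, Finset.range_orderEmbOfFin]; exact hi'.1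
      obtain ⟨j', rfl⟩ := this
      have : (j':ℕ) < (j:ℕ) := by
        by_contra hge
        push_neg at hge
        have h1 := Fin.le_def.mp (e.monotone (Fin.le_def.mpr hge))
        have h2 := hi'.2
        omega
      simp only [mem_image, mem_filter, mem_univ, true_and]
      exact ⟨j', this, rfl⟩
    calc (F.filter fun i' : Fin n => (i':ℕ) < ((e j : Fin n):ℕ)).card
        ≤ _ := Finset.card_le_card hsub
      _ ≤ (j:ℕ) := by
          rw [Finset.card_image_of_injective _ e.injective]
          exact card_filter_lt_le _
      _ < k := hj

lemma card_filter_ico_le {n : ℕ} (lo hi : ℕ) :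
    (Finset.univ.filter fun i : Fin n => lo ≤ (i : ℕ) ∧ (i : ℕ) < hi).card ≤ hi - lo := by
  classical
  have h : ((Finset.univ.filter fun i : Fin n => lo ≤ (i : ℕ) ∧ (i : ℕ) < hi).image Fin.val)
      ⊆ Finset.Ico lo hi := by
    intro a ha; simp only [mem_image, mem_filter, mem_Ico] at ha ⊢
    obtain ⟨i, ⟨-, hi⟩, rfl⟩ := ha; exact hi
  calc (Finset.univ.filter fun i : Fin n => lo ≤ (i : ℕ) ∧ (i : ℕ) < hi).card
      = ((Finset.univ.filter fun i : Fin n => lo ≤ (i : ℕ) ∧ (i : ℕ) < hi).image Fin.val).card :=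
        (Finset.card_image_of_injective _ Fin.val_injective).symm
    _ ≤ (Finset.Ico lo hi).card := Finset.card_le_card h
    _ = hi - lo := Nat.card_Ico lo hi

lemma card_filter_two {n b' lo hi : ℕ} (h1 : b' ≤ lo) (h2 : lo ≤ hi) (h3 : hi ≤ n) :
    (Finset.univ.filter fun i : Fin n => (i:ℕ) < b' ∨ (lo ≤ (i:ℕ) ∧ (i:ℕ) < hi)).card
      = b' + (hi - lo) := by
  classical
  rw [Finset.filter_or]
  rw [Finset.card_union_of_disjoint]
  · rw [card_filter_lt_eq (le_trans h1 (le_trans h2 h3)), card_filter_ico_eq h2 h3]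
  · rw [Finset.disjoint_left]
    intro i hi1 hi2
    simp only [mem_filter, mem_univ, true_and] at hi1 hi2
    omega

lemma cost_ge {n p b Γ : ℕ} {c : Fin n → ℝ} (hmono : Monotone c)
    (hpb : b < p) (hΓ1 : b + 1 ≤ Γ) (hc0n : p - b + Γ ≤ n)
    {X : Finset (Fin n)} (hcard : X.card = p)
    (hX : (X.filter fun i : Fin n => (i:ℕ) < Γ).card ≤ b) :
    ∑ i ∈ (Finset.univ.filter fun i : Fin n =>
        (i:ℕ) < b ∨ (Γ ≤ (i:ℕ) ∧ (i:ℕ) < p - b + Γ)), c i ≤ ∑ i ∈ X, c i := by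
  classical
  have hΓn : Γ ≤ n := by omega
  have hXstar : (Finset.univ.filter fun i : Fin n =>
      (i:ℕ) < b ∨ (Γ ≤ (i:ℕ) ∧ (i:ℕ) < p - b + Γ)).card = p := by
    rw [card_filter_two (by omega) (by omega) hc0n]; omega
  refine sum_le_of_prefix hmono hcard hXstar ?_
  intro k
  by_cases hk1 : k ≤ Γ
  · by_cases hk2 : k ≤ b
    · have hL : (X.filter fun i : Fin n => (i:ℕ) < k).card ≤ k := by
        refine le_trans (Finset.card_le_card ?_) (card_filter_lt_le k)
        intro i hi; simp only [mem_filter, mem_univ, true_and] at hi ⊢; exact hi.2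
      have hR : ((Finset.univ.filter fun i : Fin n =>
          (i:ℕ) < b ∨ (Γ ≤ (i:ℕ) ∧ (i:ℕ) < p - b + Γ)).filter
            fun i : Fin n => (i:ℕ) < k).card = k := by
        rw [Finset.filter_filter]
        have : (Finset.univ.filter fun i : Fin n =>
            ((i:ℕ) < b ∨ (Γ ≤ (i:ℕ) ∧ (i:ℕ) < p - b + Γ)) ∧ (i:ℕ) < k)
            = Finset.univ.filter fun i : Fin n => (i:ℕ) < k := by
          ext i; simp only [mem_filter, mem_univ, true_and]; omega
        rw [this, card_filter_lt_eq (by omega)]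
      omega
    · have hL : (X.filter fun i : Fin n => (i:ℕ) < k).card ≤ b := by
        refine le_trans (Finset.card_le_card ?_) hX
        intro i hi; simp only [mem_filter] at hi ⊢; exact ⟨hi.1, by omega⟩
      have hR : b ≤ ((Finset.univ.filter fun i : Fin n =>
          (i:ℕ) < b ∨ (Γ ≤ (i:ℕ) ∧ (i:ℕ) < p - b + Γ)).filter
            fun i : Fin n => (i:ℕ) < k).card := by
        have hsub : (Finset.univ.filter fun i : Fin n => (i:ℕ) < b) ⊆
            ((Finset.univ.filter fun i : Fin n =>
            (i:ℕ) < b ∨ (Γ ≤ (i:ℕ) ∧ (i:ℕ) < p - b + Γ)).filter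
              fun i : Fin n => (i:ℕ) < k) := by
          intro i hi; simp only [mem_filter, mem_univ, true_and] at hi ⊢; omega
        calc b = (Finset.univ.filter fun i : Fin n => (i:ℕ) < b).card :=
              (card_filter_lt_eq (by omega)).symm
          _ ≤ _ := Finset.card_le_card hsub
      omega
  · push_neg at hk1
    have hL : (X.filter fun i : Fin n => (i:ℕ) < k).card ≤ b + (k - Γ) := by
      have hsub : (X.filter fun i : Fin n => (i:ℕ) < k) ⊆
          (X.filter fun i : Fin n => (i:ℕ) < Γ) ∪
          (Finset.univ.filter fun i : Fin n => Γ ≤ (i:ℕ) ∧ (i:ℕ) < k) := by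
        intro i hi
        simp only [mem_filter, mem_union, mem_univ, true_and] at hi ⊢
        by_cases h : (i:ℕ) < Γ
        · exact Or.inl ⟨hi.1, h⟩
        · exact Or.inr ⟨by omega, hi.2⟩
      calc (X.filter fun i : Fin n => (i:ℕ) < k).card
          ≤ _ := Finset.card_le_card hsub
        _ ≤ (X.filter fun i : Fin n => (i:ℕ) < Γ).card +
            (Finset.univ.filter fun i : Fin n => Γ ≤ (i:ℕ) ∧ (i:ℕ) < k).card :=
            Finset.card_union_le _ _
        _ ≤ b + (k - Γ) := add_le_add hX (card_filter_ico_le Γ k)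
    by_cases hk3 : k ≤ p - b + Γ
    · have hR : ((Finset.univ.filter fun i : Fin n =>
          (i:ℕ) < b ∨ (Γ ≤ (i:ℕ) ∧ (i:ℕ) < p - b + Γ)).filter
            fun i : Fin n => (i:ℕ) < k).card = b + (k - Γ) := by
        rw [Finset.filter_filter]
        have : (Finset.univ.filter fun i : Fin n =>
            ((i:ℕ) < b ∨ (Γ ≤ (i:ℕ) ∧ (i:ℕ) < p - b + Γ)) ∧ (i:ℕ) < k)
            = Finset.univ.filter fun i : Fin n => (i:ℕ) < b ∨ (Γ ≤ (i:ℕ) ∧ (i:ℕ) < k) := by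
          ext i; simp only [mem_filter, mem_univ, true_and]; omega
        rw [this, card_filter_two (by omega) (by omega) (by omega)]
      omega
    · have hR : ((Finset.univ.filter fun i : Fin n =>
          (i:ℕ) < b ∨ (Γ ≤ (i:ℕ) ∧ (i:ℕ) < p - b + Γ)).filter
            fun i : Fin n => (i:ℕ) < k).card = p := by
        have : ((Finset.univ.filter fun i : Fin n =>
            (i:ℕ) < b ∨ (Γ ≤ (i:ℕ) ∧ (i:ℕ) < p - b + Γ)).filter
              fun i : Fin n => (i:ℕ) < k)
            = Finset.univ.filter fun i : Fin n =>
              (i:ℕ) < b ∨ (Γ ≤ (i:ℕ) ∧ (i:ℕ) < p - b + Γ) := by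
          rw [Finset.filter_filter]
          ext i; simp only [mem_filter, mem_univ, true_and]; omega
        rw [this, hXstar]
      have hL2 : (X.filter fun i : Fin n => (i:ℕ) < k).card ≤ p := by
        rw [← hcard]; exact Finset.card_le_card (Finset.filter_subset _ _)
      omega

lemma cost_le {n p b Γ : ℕ} {c : Fin n → ℝ} (hmono : Monotone c)
    (hpb : b < p) (hΓ1 : b + 1 ≤ Γ) (hc0n : p - b + Γ ≤ n)
    {X : Finset (Fin n)} (hcard : X.card = p)
    (hlow : ∀ i : Fin n, (i:ℕ) < b → i ∈ X)
    (hup : ∀ i ∈ X, (i:ℕ) < p - b + Γ) :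
    ∑ i ∈ X, c i ≤ ∑ i ∈ (Finset.univ.filter fun i : Fin n =>
        (i:ℕ) < b ∨ (Γ ≤ (i:ℕ) ∧ (i:ℕ) < p - b + Γ)), c i := by
  classical
  have hXstar : (Finset.univ.filter fun i : Fin n =>
      (i:ℕ) < b ∨ (Γ ≤ (i:ℕ) ∧ (i:ℕ) < p - b + Γ)).card = p := by
    rw [card_filter_two (by omega) (by omega) hc0n]; omega
  refine sum_le_of_prefix hmono hXstar hcard ?_
  intro k
  by_cases hk1 : k ≤ b
  · have hL : ((Finset.univ.filter fun i : Fin n =>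
        (i:ℕ) < b ∨ (Γ ≤ (i:ℕ) ∧ (i:ℕ) < p - b + Γ)).filter
          fun i : Fin n => (i:ℕ) < k).card ≤ k := by
      refine le_trans (Finset.card_le_card ?_) (card_filter_lt_le k)
      intro i hi; simp only [mem_filter, mem_univ, true_and] at hi ⊢; exact hi.2
    have hR : k ≤ (X.filter fun i : Fin n => (i:ℕ) < k).card := by
      have hsub : (Finset.univ.filter fun i : Fin n => (i:ℕ) < k) ⊆
          X.filter fun i : Fin n => (i:ℕ) < k := by
        intro i hi; simp only [mem_filter, mem_univ, true_and] at hi ⊢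
        exact ⟨hlow i (by omega), hi⟩
      calc k = (Finset.univ.filter fun i : Fin n => (i:ℕ) < k).card :=
            (card_filter_lt_eq (by omega)).symm
        _ ≤ _ := Finset.card_le_card hsub
    omega
  · have hRb : b ≤ (X.filter fun i : Fin n => (i:ℕ) < k).card := by
      have hsub : (Finset.univ.filter fun i : Fin n => (i:ℕ) < b) ⊆
          X.filter fun i : Fin n => (i:ℕ) < k := by
        intro i hi; simp only [mem_filter, mem_univ, true_and] at hi ⊢
        exact ⟨hlow i hi, by omega⟩
      calc b = (Finset.univ.filter fun i : Fin n => (i:ℕ) < b).card :=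
            (card_filter_lt_eq (by omega)).symm
        _ ≤ _ := Finset.card_le_card hsub
    by_cases hk2 : k ≤ Γ
    · have hL : ((Finset.univ.filter fun i : Fin n =>
          (i:ℕ) < b ∨ (Γ ≤ (i:ℕ) ∧ (i:ℕ) < p - b + Γ)).filter
            fun i : Fin n => (i:ℕ) < k).card = b := by
        rw [Finset.filter_filter]
        have : (Finset.univ.filter fun i : Fin n =>
            ((i:ℕ) < b ∨ (Γ ≤ (i:ℕ) ∧ (i:ℕ) < p - b + Γ)) ∧ (i:ℕ) < k)
            = Finset.univ.filter fun i : Fin n => (i:ℕ) < b := by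
          ext i; simp only [mem_filter, mem_univ, true_and]; omega
        rw [this, card_filter_lt_eq (by omega)]
      omega
    · push_neg at hk2
      by_cases hk3 : k ≤ p - b + Γ
      · have hL : ((Finset.univ.filter fun i : Fin n =>
            (i:ℕ) < b ∨ (Γ ≤ (i:ℕ) ∧ (i:ℕ) < p - b + Γ)).filter
              fun i : Fin n => (i:ℕ) < k).card = b + (k - Γ) := by
          rw [Finset.filter_filter]
          have : (Finset.univ.filter fun i : Fin n =>
              ((i:ℕ) < b ∨ (Γ ≤ (i:ℕ) ∧ (i:ℕ) < p - b + Γ)) ∧ (i:ℕ) < k)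
              = Finset.univ.filter fun i : Fin n => (i:ℕ) < b ∨ (Γ ≤ (i:ℕ) ∧ (i:ℕ) < k) := by
            ext i; simp only [mem_filter, mem_univ, true_and]; omega
          rw [this, card_filter_two (by omega) (by omega) (by omega)]
        have hR : p - (p - b + Γ - k) ≤ (X.filter fun i : Fin n => (i:ℕ) < k).card := by
          have hsplit := Finset.card_filter_add_card_filter_not
            (s := X) (p := fun i : Fin n => (i:ℕ) < k)
          have hcompl : (X.filter fun i : Fin n => ¬ (i:ℕ) < k).card ≤ p - b + Γ - k := by
            refine le_trans (Finset.card_le_card ?_) (card_filter_ico_le k (p - b + Γ))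
            intro i hi; simp only [mem_filter, mem_univ, true_and] at hi ⊢
            exact ⟨by omega, hup i hi.1⟩
          omega
        omega
      · have hL : ((Finset.univ.filter fun i : Fin n =>
            (i:ℕ) < b ∨ (Γ ≤ (i:ℕ) ∧ (i:ℕ) < p - b + Γ)).filter
              fun i : Fin n => (i:ℕ) < k).card ≤ p :=
          le_trans (Finset.card_le_card (Finset.filter_subset _ _)) (le_of_eq hXstar)
        have hR : (X.filter fun i : Fin n => (i:ℕ) < k).card = p := by
          rw [← hcard]; congr 1
          apply Finset.filter_true_of_mem
          intro i hi; have := hup i hi; omega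
        omega

lemma phi_ge (n p b Γ : ℕ) (c : Fin n → ℝ) (hmono : Monotone c)
    (hpb : b < p) (hΓ1 : b + 1 ≤ Γ) (hc0n : p - b + Γ ≤ n)
    (I : Finset (Fin n)) :
    ((∑ i ∈ Finset.univ.filter fun i : Fin n =>
        (i:ℕ) < b ∨ (Γ ≤ (i:ℕ) ∧ (i:ℕ) < p - b + Γ), c i : ℝ) : EReal) ≤ Phi n p b Γ c I := by
  classical
  set γ : Fin n → Bool := fun i => decide (i ∈ I ∧ (i:ℕ) < Γ) with hγ
  have hγcard : (Finset.univ.filter fun i => γ i = true).card ≤ Γ := by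
    refine le_trans (Finset.card_le_card ?_) (card_filter_lt_le Γ)
    intro i hi
    simp only [hγ, mem_filter, mem_univ, true_and, decide_eq_true_eq] at hi ⊢
    exact hi.2
  unfold Phi
  refine le_iSup_of_le ⟨γ, hγcard⟩ (le_sInf ?_)
  rintro v ⟨x, hxcard, hfeas, rfl⟩
  set δ : Fin n → Bool := fun i => decide ((i:ℕ) < Γ) && (decide (i ∈ I) || x i) with hδ
  have h1 : (Finset.univ.filter fun i => δ i = true).card ≤ Γ := by
    refine le_trans (Finset.card_le_card ?_) (card_filter_lt_le Γ)
    intro i hi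
    simp only [hδ, mem_filter, mem_univ, true_and, Bool.and_eq_true, decide_eq_true_eq] at hi ⊢
    exact hi.1
  have h2 : ∀ i ∈ I, δ i = γ i := by
    intro i hi; simp [hδ, hγ, hi]
  have h3 := hfeas δ h1 h2
  have h4 : (Finset.univ.filter fun i => δ i = true ∧ x i = true)
      = ((Finset.univ.filter fun i => x i = true).filter fun i : Fin n => (i:ℕ) < Γ) := by
    ext i
    simp only [hδ, mem_filter, mem_univ, true_and, Bool.and_eq_true, Bool.or_eq_true,
      decide_eq_true_eq]
    tauto
  rw [h4] at h3
  exact EReal.coe_le_coe_iff.mpr (cost_ge hmono hpb hΓ1 hc0n hxcard h3)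

lemma phi_le (n p b Γ q : ℕ) (c : Fin n → ℝ) (hmono : Monotone c)
    (hn : p + q ≤ n) (hpb : b < p) (hΓ1 : b + 1 ≤ Γ) (hΓ2 : Γ ≤ b + q)
    (hp : p + Γ ≤ 2 * b + q + 1) :
    Phi n p b Γ c (Finset.univ.filter fun i : Fin n => b ≤ (i:ℕ) ∧ (i:ℕ) < b + q) ≤
    ((∑ i ∈ Finset.univ.filter fun i : Fin n =>
        (i:ℕ) < b ∨ (Γ ≤ (i:ℕ) ∧ (i:ℕ) < p - b + Γ), c i : ℝ) : EReal) := by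
  classical
  have hc0n : p - b + Γ ≤ n := by omega
  unfold Phi
  refine iSup_le ?_
  rintro ⟨γ, hγcard⟩
  set S : Finset (Fin n) :=
    Finset.univ.filter (fun i => γ i = true ∧ b ≤ (i:ℕ) ∧ (i:ℕ) < b + q) with hS
  set a := S.card with ha
  have haΓ : a ≤ Γ := by
    refine le_trans (Finset.card_le_card ?_) hγcard
    intro i hi; simp only [hS, mem_filter] at hi ⊢; exact ⟨hi.1, hi.2.1⟩
  have haq : a ≤ q := by
    have := le_trans (Finset.card_le_card (s := S)
      (t := Finset.univ.filter fun i : Fin n => b ≤ (i:ℕ) ∧ (i:ℕ) < b + q)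
      (fun i hi => by simp only [hS, mem_filter] at hi ⊢; exact ⟨hi.1, hi.2.2⟩))
      (le_of_eq (card_filter_ico_eq (by omega) (by omega)))
    omega
  set m := min a (Γ - b) with hm
  obtain ⟨D, hDS, hDcard⟩ := Finset.exists_subset_card_eq (s := S) (n := m) (by omega)
  have hDlow : ∀ i ∈ D, b ≤ (i:ℕ) := fun i hi => by
    have := hDS hi; simp only [hS, mem_filter] at this; exact this.2.2.1
  set F : Finset (Fin n) := Finset.univ.filter (fun i => b ≤ (i:ℕ) ∧ i ∉ D) with hF
  -- F has at least p - b elements below p - b + Γ, and (in regime B) below b + q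
  have hGsub : ∀ hi' : ℕ, m + (p - b) + b ≤ hi' → hi' ≤ n →
      p - b ≤ (F.filter fun j : Fin n => (j:ℕ) < hi').card := by
    intro hi' h1 h2
    have hsub : (Finset.univ.filter fun j : Fin n => b ≤ (j:ℕ) ∧ (j:ℕ) < hi') \ D ⊆
        F.filter fun j : Fin n => (j:ℕ) < hi' := by
      intro j hj
      simp only [mem_sdiff, mem_filter, mem_univ, true_and, hF] at hj ⊢
      exact ⟨⟨hj.1.1, hj.2⟩, hj.1.2⟩
    have hc := Finset.le_card_sdiff D
      (Finset.univ.filter fun j : Fin n => b ≤ (j:ℕ) ∧ (j:ℕ) < hi')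
    rw [card_filter_ico_eq (by omega) h2, hDcard] at hc
    have := le_trans hc (Finset.card_le_card hsub)
    omega
  have hFcard : p - b ≤ F.card := by
    refine le_trans (hGsub (p - b + Γ) (by omega) hc0n) (Finset.card_le_card ?_)
    exact Finset.filter_subset _ _
  obtain ⟨E, hEF, hEcard, hEmin⟩ := exists_smallest_subset F hFcard
  have hEb : ∀ i ∈ E, b ≤ (i:ℕ) := by
    intro i hi; have := hEF hi; simp only [hF, mem_filter] at this; exact this.2.1
  have hED : ∀ i ∈ E, i ∉ D := by
    intro i hi; have := hEF hi; simp only [hF, mem_filter] at this; exact this.2.2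
  have hEup : ∀ i ∈ E, (i:ℕ) < p - b + Γ := by
    intro i hi
    by_contra hge
    push_neg at hge
    have h1 := hGsub (p - b + Γ) (by omega) hc0n
    have h2 : (F.filter fun j : Fin n => (j:ℕ) < p - b + Γ).card ≤
        (F.filter fun j : Fin n => (j:ℕ) < (i:ℕ)).card := by
      refine Finset.card_le_card ?_
      intro j hj; simp only [mem_filter] at hj ⊢; exact ⟨hj.1, by omega⟩
    have := hEmin i hi
    omega
  have hEq' : a < Γ - b → ∀ i ∈ E, (i:ℕ) < b + q := by
    intro hreg i hi
    by_contra hge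
    push_neg at hge
    have h1 := hGsub (b + q) (by omega) (by omega)
    have h2 : (F.filter fun j : Fin n => (j:ℕ) < b + q).card ≤
        (F.filter fun j : Fin n => (j:ℕ) < (i:ℕ)).card := by
      refine Finset.card_le_card ?_
      intro j hj; simp only [mem_filter] at hj ⊢; exact ⟨hj.1, by omega⟩
    have := hEmin i hi
    omega
  set X : Finset (Fin n) := (Finset.univ.filter fun i : Fin n => (i:ℕ) < b) ∪ E with hX
  have hdisj : Disjoint (Finset.univ.filter fun i : Fin n => (i:ℕ) < b) E := by
    rw [Finset.disjoint_left]
    intro i hi1 hi2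
    simp only [mem_filter, mem_univ, true_and] at hi1
    have := hEb i hi2
    omega
  have hXcard : X.card = p := by
    rw [hX, Finset.card_union_of_disjoint hdisj, card_filter_lt_eq (by omega), hEcard]
    omega
  have hlow : ∀ i : Fin n, (i:ℕ) < b → i ∈ X := by
    intro i hi; rw [hX, Finset.mem_union]; left
    simp only [mem_filter, mem_univ, true_and]; exact hi
  have hXup : ∀ i ∈ X, (i:ℕ) < p - b + Γ := by
    intro i hi
    rw [hX, Finset.mem_union] at hi
    rcases hi with hi | hi
    · simp only [mem_filter, mem_univ, true_and] at hi; omega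
    · exact hEup i hi
  have hXD : ∀ i ∈ X, i ∉ D := by
    intro i hi
    rw [hX, Finset.mem_union] at hi
    rcases hi with hi | hi
    · simp only [mem_filter, mem_univ, true_and] at hi
      intro hiD; have := hDlow i hiD; omega
    · exact hED i hi
  -- the decision x
  set x : Fin n → Bool := fun i => decide (i ∈ X) with hx
  have hxset : (Finset.univ.filter fun i => x i = true) = X := by
    ext i; simp [hx]
  refine sInf_le_of_le (b := ((∑ i ∈ X, c i : ℝ) : EReal)) ⟨x, ?_, ?_, by rw [hxset]⟩ ?_
  · rw [hxset]; exact hXcard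
  · -- feasibility
    intro δ hδcard hδagree
    set PI : Fin n → Prop := fun i => b ≤ (i:ℕ) ∧ (i:ℕ) < b + q with hPI
    have hagree : ∀ i : Fin n, PI i → δ i = γ i := by
      intro i hi
      exact hδagree i (by simp only [mem_filter, mem_univ, true_and]; exact hi)
    set T := Finset.univ.filter (fun i => δ i = true ∧ x i = true) with hT
    have hsplit := Finset.card_filter_add_card_filter_not (s := T) (p := PI)
    have hb1 : (T.filter PI).card ≤ a - m := by
      have hsub : T.filter PI ⊆ S \ D := by
        intro i hi
        simp only [hT, mem_filter, mem_univ, true_and] at hi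
        obtain ⟨⟨hδi, hxi⟩, hPIi⟩ := hi
        have hγi : γ i = true := by rw [← hagree i hPIi]; exact hδi
        have hiX : i ∈ X := by rwa [hx, decide_eq_true_eq] at hxi
        rw [Finset.mem_sdiff]
        refine ⟨?_, hXD i hiX⟩
        simp only [hS, mem_filter, mem_univ, true_and]
        exact ⟨hγi, hPIi⟩
      have := Finset.card_le_card hsub
      rwa [Finset.card_sdiff_of_subset hDS, hDcard] at this
    have hΔS : (Finset.univ.filter (fun i => δ i = true)).filter PI = S := by
      ext i
      simp only [hS, mem_filter, mem_univ, true_and]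
      constructor
      · rintro ⟨hδi, hPIi⟩; rw [hagree i hPIi] at hδi; exact ⟨hδi, hPIi⟩
      · rintro ⟨hγi, hPIi⟩; rw [hagree i hPIi]; exact ⟨hγi, hPIi⟩
    have hΔsplit := Finset.card_filter_add_card_filter_not
      (s := Finset.univ.filter (fun i => δ i = true)) (p := PI)
    have hb2 : (T.filter fun i => ¬ PI i).card ≤ Γ - a := by
      have hsub : (T.filter fun i => ¬ PI i) ⊆
          (Finset.univ.filter (fun i => δ i = true)).filter fun i => ¬ PI i := by
        intro i hi
        simp only [hT, mem_filter, mem_univ, true_and] at hi ⊢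
        exact ⟨hi.1.1, hi.2⟩
      have := Finset.card_le_card hsub
      rw [hΔS] at hΔsplit
      omega
    have hb3 : (T.filter fun i => ¬ PI i).card ≤ b + (E.filter fun i => ¬ PI i).card := by
      have hsub : (T.filter fun i => ¬ PI i) ⊆
          (Finset.univ.filter fun i : Fin n => (i:ℕ) < b) ∪ (E.filter fun i => ¬ PI i) := by
        intro i hi
        simp only [hT, mem_filter, mem_univ, true_and] at hi
        have hiX : i ∈ X := by
          have := hi.1.2; rwa [hx, decide_eq_true_eq] at this
        rw [hX, Finset.mem_union] at hiX
        rcases hiX with h | h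
        · exact Finset.mem_union_left _ h
        · exact Finset.mem_union_right _ (Finset.mem_filter.mpr ⟨h, hi.2⟩)
      refine le_trans (Finset.card_le_card hsub) (le_trans (Finset.card_union_le _ _) ?_)
      rw [card_filter_lt_eq (by omega : b ≤ n)]
    by_cases hreg : a < Γ - b
    · -- regime B : D = S, E ⊆ I*
      have hmB : m = a := by omega
      have hDSeq : D = S := Finset.eq_of_subset_of_card_le hDS (by omega)
      have hb1' : (T.filter PI).card = 0 := by
        have : a - m = 0 := by omega
        omega
      have hEPI : (E.filter fun i => ¬ PI i) = ∅ := by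
        rw [Finset.filter_eq_empty_iff]
        intro i hi
        have h1 := hEq' hreg i hi
        have h2 := hEb i hi
        intro hcon
        exact hcon ⟨h2, h1⟩
      rw [hEPI] at hb3
      simp only [Finset.card_empty] at hb3
      omega
    · -- regime A : m = Γ - b
      have hmA : m = Γ - b := by omega
      omega
  · exact EReal.coe_le_coe_iff.mpr (cost_le hmono hpb hΓ1 hc0n hXcard hlow hXup)

theorem stmt15 (n p b Γ q : ℕ) (c : Fin n → ℝ) (hmono : Monotone c)
    (hn : p + q ≤ n) (hpb : b < p) (hΓ1 : b + 1 ≤ Γ) (hΓ2 : Γ ≤ b + q)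
    (hp : p + Γ ≤ 2 * b + q + 1) :
    (∀ I : Finset (Fin n), I.card ≤ q →
      Phi n p b Γ c (Finset.univ.filter (fun i : Fin n => b ≤ (i : ℕ) ∧ (i : ℕ) < b + q)) ≤
        Phi n p b Γ c I) ∧
    Phi n p b Γ c (Finset.univ.filter (fun i : Fin n => b ≤ (i : ℕ) ∧ (i : ℕ) < b + q)) =
      (((∑ i ∈ Finset.univ.filter (fun i : Fin n => (i : ℕ) < b), c i) +
        ∑ i ∈ Finset.univ.filter (fun i : Fin n => Γ ≤ (i : ℕ) ∧ (i : ℕ) < p - b + Γ), c i : ℝ)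
        : EReal) := by
  classical
  have hc0n : p - b + Γ ≤ n := by omega
  have hdisj : Disjoint (Finset.univ.filter fun i : Fin n => (i:ℕ) < b)
      (Finset.univ.filter fun i : Fin n => Γ ≤ (i:ℕ) ∧ (i:ℕ) < p - b + Γ) := by
    rw [Finset.disjoint_left]
    intro i hi1 hi2
    simp only [mem_filter, mem_univ, true_and] at hi1 hi2
    omega
  have hVeq : (∑ i ∈ Finset.univ.filter fun i : Fin n =>
        (i:ℕ) < b ∨ (Γ ≤ (i:ℕ) ∧ (i:ℕ) < p - b + Γ), c i)
      = (∑ i ∈ Finset.univ.filter fun i : Fin n => (i:ℕ) < b, c i) +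
        ∑ i ∈ Finset.univ.filter fun i : Fin n => Γ ≤ (i:ℕ) ∧ (i:ℕ) < p - b + Γ, c i := by
    rw [Finset.filter_or, Finset.sum_union hdisj]
  have heq : Phi n p b Γ c
      (Finset.univ.filter (fun i : Fin n => b ≤ (i : ℕ) ∧ (i : ℕ) < b + q))
      = ((∑ i ∈ Finset.univ.filter fun i : Fin n =>
          (i:ℕ) < b ∨ (Γ ≤ (i:ℕ) ∧ (i:ℕ) < p - b + Γ), c i : ℝ) : EReal) :=
    le_antisymm (phi_le n p b Γ q c hmono hn hpb hΓ1 hΓ2 hp)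
      (phi_ge n p b Γ c hmono hpb hΓ1 hc0n _)
  constructor
  · intro I hI
    rw [heq]
    exact phi_ge n p b Γ c hmono hpb hΓ1 hc0n I
  · rw [heq, hVeq]
end

section
/- In the constraint-uncertainty DDID selection problem, for any query set I and any budget ΓI ∈ {0, 1, ..., min(|I|, Γ)} of attacks on queried items, an optimal adversary choice γ attacking exactly ΓI queried items can be taken to attack the ΓI queried items with smallest cost c; that is, there exists a maximizer γ* of the inner value with γ*_i = 1 exactly for the ΓI cheapest elements of I. -/
/-!
Fix the adversary's observation `T` on the queried items and let `S` be the `ΓI` cheapest queried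
items. From any selection `X` that is robustly feasible against `S`, remove
`#(T ∩ X) - #(S ∩ X)` selected items of `T \ S` and add as many unselected items of `S \ T`.
The new selection agrees with `X` outside `I`, meets `T` in at most `#(S ∩ X)` items and is no
more expensive, because every item of `S` is cheaper than every item of `I \ S`. Any attack
agreeing with `T` on `I` can be replaced by the attack that agrees with `S` on `I` and with it
elsewhere; this has the same size and hits `X` at least as often as the original attack hits the
new selection. So the new selection is robustly feasible against `T`, and the value for `T` is at
most the value for `S`.
-/

open Finset

/-- Inner value of the constraint-uncertainty DDID selection problem for a fixed
adversary observation `γ`, valued in `EReal` (`⊤` when infeasible). -/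
noncomputable def innerCU (n p b Γ : ℕ) (c : Fin n → ℝ) (I : Finset (Fin n))
    (γ : Fin n → Bool) : EReal :=
  sInf {v : EReal | ∃ x : Fin n → Bool,
    (Finset.univ.filter (fun i => x i = true)).card = p ∧
    (∀ δ : Fin n → Bool,
      (Finset.univ.filter (fun i => δ i = true)).card ≤ Γ →
      (∀ i ∈ I, δ i = γ i) →
      (Finset.univ.filter (fun i => δ i = true ∧ x i = true)).card ≤ b) ∧
    v = ((∑ i ∈ Finset.univ.filter (fun i => x i = true), c i : ℝ) : EReal)}

namespace Finset

theorem exists_initial_subset_card_eq {α : Type*} [LinearOrder α] (I : Finset α) {k : ℕ}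
    (hk : k ≤ #I) : ∃ S ⊆ I, #S = k ∧ ∀ i ∈ S, ∀ j ∈ I, j ∉ S → i ≤ j := by
  induction k with
  | zero => exact ⟨∅, empty_subset _, card_empty, by simp⟩
  | succ k ih =>
    obtain ⟨S, hSI, hScard, hSmin⟩ := ih (by omega)
    have hne : (I \ S).Nonempty := by rw [← card_pos, card_sdiff_of_subset hSI]; omega
    obtain ⟨haI, haS⟩ := mem_sdiff.1 ((I \ S).min'_mem hne)
    refine ⟨insert ((I \ S).min' hne) S, insert_subset haI hSI,
      by rw [card_insert_of_notMem haS, hScard], ?_⟩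
    intro i hi j hj hjS
    rw [mem_insert, not_or] at *
    rcases hi with rfl | hi
    · exact min'_le _ _ (mem_sdiff.2 ⟨hj, hjS.2⟩)
    · exact hSmin i hi j hj hjS.2

theorem sum_le_sum_of_card_eq_of_forall_le {ι M : Type*} [AddCommMonoid M] [LinearOrder M]
    [IsOrderedAddMonoid M] {A D : Finset ι} (f : ι → M) (hcard : #A = #D)
    (h : ∀ a ∈ A, ∀ d ∈ D, f a ≤ f d) : ∑ a ∈ A, f a ≤ ∑ d ∈ D, f d := by
  obtain rfl | hD := D.eq_empty_or_nonempty
  · simp [card_eq_zero.1 hcard]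
  obtain ⟨d₀, hd₀, hmin⟩ := D.exists_min_image f hD
  calc ∑ a ∈ A, f a ≤ #A • f d₀ := sum_le_card_nsmul A f _ fun a ha => h a ha d₀ hd₀
    _ = #D • f d₀ := by rw [hcard]
    _ ≤ ∑ d ∈ D, f d := card_nsmul_le_sum D f _ hmin

variable {α M : Type*} [DecidableEq α]
  [AddCommMonoid M] [LinearOrder M] [IsOrderedAddMonoid M]

theorem card_sdiff_union_of_card_eq {X D A : Finset α} (hD : D ⊆ X) (hA : Disjoint A X)
    (hcard : #A = #D) : #((X \ D) ∪ A) = #X := by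
  rw [card_union_of_disjoint (disjoint_of_subset_left sdiff_subset hA.symm),
    card_sdiff_of_subset hD, hcard, Nat.sub_add_cancel (card_le_card hD)]

theorem sum_sdiff_union_le {X D A : Finset α} (c : α → M) (hD : D ⊆ X) (hA : Disjoint A X)
    (hcard : #A = #D) (hcheap : ∀ a ∈ A, ∀ d ∈ D, c a ≤ c d) :
    ∑ i ∈ (X \ D) ∪ A, c i ≤ ∑ i ∈ X, c i :=
  calc ∑ i ∈ (X \ D) ∪ A, c i = ∑ i ∈ X \ D, c i + ∑ i ∈ A, c i :=
        sum_union (disjoint_of_subset_left sdiff_subset hA.symm)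
    _ ≤ ∑ i ∈ X \ D, c i + ∑ i ∈ D, c i :=
        add_le_add_right (sum_le_sum_of_card_eq_of_forall_le c hcard hcheap) _
    _ = ∑ i ∈ X, c i := sum_sdiff hD

theorem card_inter_eq_card_inter_add_card_sdiff (A B I : Finset α) :
    #(A ∩ B) = #((A ∩ I) ∩ B) + #((A \ I) ∩ (B \ I)) := by
  rw [← card_inter_add_card_sdiff (A ∩ B) I]
  congr 2 <;> ext <;> simp only [mem_inter, mem_sdiff] <;> tauto

theorem exists_exchange_of_cheaper (c : α → M) {I S T : Finset α} (X : Finset α)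
    (hSI : S ⊆ I) (hTI : T ⊆ I) (hcard : #S = #T) (hcheap : ∀ s ∈ S, ∀ t ∈ T, t ∉ S → c s ≤ c t) :
    ∃ X', #X' = #X ∧ X' \ I = X \ I ∧ #(T ∩ X') ≤ #(S ∩ X) ∧
      ∑ i ∈ X', c i ≤ ∑ i ∈ X, c i := by
  set d := #(T ∩ X) - #(S ∩ X)
  have hdD : d ≤ #((T ∩ X) \ S) := by
    have hTS : (T ∩ X) \ (S ∩ X) = (T ∩ X) \ S := by grind
    exact hTS ▸ le_card_sdiff (S ∩ X) (T ∩ X)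
  have hdA : d ≤ #((S \ X) \ T) := by
    have hST : (S \ X) \ (T \ X) = (S \ X) \ T := by grind
    have := hST ▸ le_card_sdiff (T \ X) (S \ X)
    have := card_sdiff_add_card_inter S X
    have := card_sdiff_add_card_inter T X
    omega
  obtain ⟨D, hD, hDcard⟩ := exists_subset_card_eq hdD
  obtain ⟨A, hA, hAcard⟩ := exists_subset_card_eq hdA
  have hDX : D ⊆ X := fun i hi => (mem_inter.1 (mem_sdiff.1 (hD hi)).1).2
  have hAX : Disjoint A X :=
    disjoint_left.2 fun i hi => (mem_sdiff.1 (mem_sdiff.1 (hA hi)).1).2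
  have hAD : #A = #D := hAcard.trans hDcard.symm
  refine ⟨(X \ D) ∪ A, card_sdiff_union_of_card_eq hDX hAX hAD, by grind, ?_,
    sum_sdiff_union_le c hDX hAX hAD fun a ha t ht => ?_⟩
  · have hDTX : D ⊆ T ∩ X := hD.trans sdiff_subset
    have := card_le_card (show T ∩ ((X \ D) ∪ A) ⊆ (T ∩ X) \ D by grind)
    rw [card_sdiff_of_subset hDTX] at this
    omega
  · have ha := mem_sdiff.1 (mem_sdiff.1 (hA ha)).1
    have ht := mem_sdiff.1 (hD ht)
    exact hcheap a ha.1 t (mem_inter.1 ht.1).1 ht.2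

end Finset

section RobustFeasible

variable {α : Type*} [DecidableEq α]

/-- Finset form of the constraint in `innerCU`: `X` is the selection, `G` the adversary's
observation on the queried items `I`, and `Δ` ranges over the attacks compatible with it. -/
def RobustFeasible (b Γ : ℕ) (I G X : Finset α) : Prop :=
  ∀ Δ : Finset α, #Δ ≤ Γ → Δ ∩ I = G ∩ I → #(Δ ∩ X) ≤ b

theorem RobustFeasible.of_exchange {b Γ : ℕ} {I S T X X' : Finset α} (hSI : S ⊆ I)
    (hTI : T ⊆ I) (hcard : #S = #T) (hout : X' \ I = X \ I) (hinter : #(T ∩ X') ≤ #(S ∩ X))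
    (hX : RobustFeasible b Γ I S X) : RobustFeasible b Γ I T X' := by
  intro Δ' hΔ' hΔ'I
  rw [inter_eq_left.2 hTI] at hΔ'I
  have hΔI : (S ∪ Δ' \ I) ∩ I = S := by grind
  have hΔout : (S ∪ Δ' \ I) \ I = Δ' \ I := by grind
  have hΔcard : #(S ∪ Δ' \ I) ≤ Γ := by
    have := card_inter_add_card_sdiff Δ' I
    rw [hΔ'I] at this
    rw [card_union_of_disjoint (disjoint_of_subset_left hSI disjoint_sdiff)]
    omega
  calc #(Δ' ∩ X') = #(T ∩ X') + #((Δ' \ I) ∩ (X \ I)) := by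
        rw [card_inter_eq_card_inter_add_card_sdiff Δ' X' I, hΔ'I, hout]
    _ ≤ #(S ∩ X) + #((Δ' \ I) ∩ (X \ I)) := by omega
    _ = #((S ∪ Δ' \ I) ∩ X) := by
        rw [card_inter_eq_card_inter_add_card_sdiff (S ∪ Δ' \ I) X I, hΔI, hΔout]
    _ ≤ b := hX _ hΔcard (by rw [hΔI, inter_eq_left.2 hSI])

theorem boolConstraint_iff_robustFeasible [Fintype α] (b Γ : ℕ) (I : Finset α)
    (γ x : α → Bool) :
    (∀ δ : α → Bool, #{i | δ i = true} ≤ Γ → (∀ i ∈ I, δ i = γ i) →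
      #{i | δ i = true ∧ x i = true} ≤ b) ↔
    RobustFeasible b Γ I {i | γ i = true} {i | x i = true} := by
  have hagree (δ : α → Bool) : (∀ i ∈ I, δ i = γ i) ↔
      ({i | δ i = true} : Finset α) ∩ I = ({i | γ i = true} : Finset α) ∩ I := by
    simp only [Finset.ext_iff, mem_inter, mem_filter, mem_univ, true_and]
    exact forall_congr' fun i => by cases δ i <;> cases γ i <;> simp
  constructor
  · intro h Δ hΔΓ hΔI
    have hsupp : ({i | decide (i ∈ Δ) = true} : Finset α) = Δ := by ext; simp
    have := h (fun i => decide (i ∈ Δ)) (by rwa [hsupp]) ((hagree _).2 (by rwa [hsupp]))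
    rwa [filter_and, hsupp] at this
  · intro h δ hδ hδI
    rw [filter_and]
    exact h _ hδ ((hagree δ).1 hδI)

end RobustFeasible

section InnerValue

variable {n p b Γ : ℕ} {c : Fin n → ℝ} {I : Finset (Fin n)} {γ : Fin n → Bool}

theorem innerCU_le_sum {X : Finset (Fin n)} (hXp : #X = p)
    (hX : RobustFeasible b Γ I {i | γ i = true} X) :
    innerCU n p b Γ c I γ ≤ (∑ i ∈ X, c i : ℝ) := by
  have hsupp : ({i | decide (i ∈ X) = true} : Finset (Fin n)) = X := by ext; simp
  refine sInf_le ⟨fun i => decide (i ∈ X), by rwa [hsupp], ?_, by rw [hsupp]⟩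
  rw [boolConstraint_iff_robustFeasible, hsupp]
  exact hX

theorem le_innerCU {v : EReal}
    (h : ∀ X : Finset (Fin n), #X = p → RobustFeasible b Γ I {i | γ i = true} X →
      v ≤ (∑ i ∈ X, c i : ℝ)) :
    v ≤ innerCU n p b Γ c I γ :=
  le_sInf <| by
    rintro _ ⟨x, hxp, hx, rfl⟩
    exact h _ hxp ((boolConstraint_iff_robustFeasible b Γ I γ x).1 hx)

end InnerValue

theorem stmt18_general (n p b Γ ΓI : ℕ) (c : Fin n → ℝ) (hmono : Monotone c)
    (I : Finset (Fin n)) (hΓI1 : ΓI ≤ I.card) :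
    ∃ S ⊆ I, S.card = ΓI ∧ (∀ i ∈ S, ∀ j ∈ I, j ∉ S → i ≤ j) ∧
      ∀ γ : Fin n → Bool, (∀ i, γ i = true → i ∈ I) →
        (Finset.univ.filter (fun i => γ i = true)).card = ΓI →
        innerCU n p b Γ c I γ ≤ innerCU n p b Γ c I (fun i => decide (i ∈ S)) := by
  obtain ⟨S, hSI, hScard, hSmin⟩ := I.exists_initial_subset_card_eq hΓI1
  refine ⟨S, hSI, hScard, hSmin, fun γ hγI hγcard => le_innerCU fun X hXp hX => ?_⟩
  have hS : ({i | decide (i ∈ S) = true} : Finset (Fin n)) = S := by ext; simp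
  rw [hS] at hX
  have hTI : ({i | γ i = true} : Finset (Fin n)) ⊆ I := fun i hi => hγI i (mem_filter.1 hi).2
  have hcard : #S = #{i | γ i = true} := hScard.trans hγcard.symm
  obtain ⟨X', hX'p, hout, hinter, hcost⟩ := exists_exchange_of_cheaper c X hSI hTI hcard
    fun s hs t ht htS => hmono (hSmin s hs t (hTI ht) htS)
  calc innerCU n p b Γ c I γ ≤ (∑ i ∈ X', c i : ℝ) :=
        innerCU_le_sum (hX'p.trans hXp) (hX.of_exchange hSI hTI hcard hout hinter)
    _ ≤ (∑ i ∈ X, c i : ℝ) := EReal.coe_le_coe_iff.2 hcost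

theorem stmt18 (n p b Γ ΓI : ℕ) (c : Fin n → ℝ) (hmono : Monotone c)
    (I : Finset (Fin n)) (hΓI1 : ΓI ≤ I.card) (hΓI2 : ΓI ≤ Γ) :
    ∃ S ⊆ I, S.card = ΓI ∧ (∀ i ∈ S, ∀ j ∈ I, j ∉ S → i ≤ j) ∧
      ∀ γ : Fin n → Bool, (∀ i, γ i = true → i ∈ I) →
        (Finset.univ.filter (fun i => γ i = true)).card = ΓI →
        innerCU n p b Γ c I γ ≤ innerCU n p b Γ c I (fun i => decide (i ∈ S)) :=
  stmt18_general n p b Γ ΓI c hmono I hΓI1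
end

section
/- If the partition problem instance k_1, ..., k_m with ∑ k_i = 2K has a solution (a subset S with |S| = m/2 and ∑_{i∈S} k_i = K), then the constructed instance of the constraint-uncertainty DDID problem with knapsack query sets — n = m+1, a_i = k_i and c_i = −k_i for i ≤ m, a_{m+1} = K+1, c_{m+1} = −K−1, capacity C = K, p = m/2, Γ = 1, b = 0 — has optimal value −K, and conversely an optimal value of −K implies the partition instance has a solution. Hence the constraint-uncertainty DDID problem with knapsack query sets is NP-hard. -/
open Finset

private def aa (m K : ℕ) (k : Fin m → ℕ) : Fin (m+1) → ℝ :=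
  fun j => if h : (j : ℕ) < m then (k ⟨j, h⟩ : ℝ) else (K + 1 : ℝ)

private lemma aa_nonneg (m K : ℕ) (k : Fin m → ℕ) (j : Fin (m+1)) : 0 ≤ aa m K k j := by
  unfold aa; split
  · positivity
  · positivity

private lemma aa_cast (m K : ℕ) (k : Fin m → ℕ) (s : Fin m) :
    aa m K k s.castSucc = (k s : ℝ) := by
  have h : ((s.castSucc : Fin (m+1)) : ℕ) < m := s.isLt
  simp only [aa, dif_pos h]
  have : (⟨((s.castSucc : Fin (m+1)) : ℕ), h⟩ : Fin m) = s := Fin.ext (by simp)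
  rw [this]

private lemma aa_last (m K : ℕ) (k : Fin m → ℕ) : aa m K k (Fin.last m) = (K : ℝ) + 1 := by
  unfold aa
  rw [dif_neg (by simp [Fin.last])]

private lemma cc_eq (m K : ℕ) (k : Fin m → ℕ) :
    (fun j : Fin (m + 1) =>
      if h : (j : ℕ) < m then -(k ⟨j, h⟩ : ℝ) else -(K + 1 : ℝ))
    = fun j => -(aa m K k j) := by
  funext j
  by_cases h : (j : ℕ) < m <;> simp [aa, h]

private lemma singleton_of_card_le_one {n : ℕ} (δ : Fin n → Bool)
    (h : (univ.filter (fun i => δ i = true)).card ≤ 1) {i j : Fin n}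
    (hi : δ i = true) (hj : δ j = true) : i = j := by
  by_contra hne
  have hsub : ({i, j} : Finset (Fin n)) ⊆ univ.filter (fun i => δ i = true) := by
    intro t ht
    simp only [mem_insert, mem_singleton] at ht
    rcases ht with rfl | rfl <;> simp [hi, hj]
  have := Finset.card_le_card hsub
  rw [Finset.card_insert_of_notMem (by simp [hne]), Finset.card_singleton] at this
  omega

private lemma mem_struct (m K : ℕ) (k : Fin m → ℕ) (I : Finset (Fin (m+1))) (v : EReal)
    (hv : ∃ x : Fin (m+1) → Bool,
      (univ.filter (fun i => x i = true)).card = m / 2 ∧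
      (∀ δ : Fin (m+1) → Bool,
        (univ.filter (fun i => δ i = true)).card ≤ 1 →
        (∀ i ∈ I, δ i = false) →
        (univ.filter (fun i => δ i = true ∧ x i = true)).card ≤ 0) ∧
      v = ((∑ i ∈ univ.filter (fun i => x i = true), -(aa m K k i) : ℝ) : EReal)) :
    ∃ T : Finset (Fin (m+1)), T ⊆ I ∧ T.card = m / 2 ∧
      v = ((-(∑ i ∈ T, aa m K k i) : ℝ) : EReal) := by
  obtain ⟨x, hcard, hfeas, hval⟩ := hv
  refine ⟨univ.filter (fun i => x i = true), ?_, hcard, by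
    rw [hval, Finset.sum_neg_distrib]⟩
  intro i hi
  by_contra hiI
  have h1 := hfeas (fun t => decide (t = i)) (by simp [Finset.filter_eq'])
    (fun t ht => decide_eq_false (fun h => hiI (h ▸ ht)))
  have hxi : x i = true := (mem_filter.1 hi).2
  have h2 : i ∈ univ.filter (fun t => decide (t = i) = true ∧ x t = true) := by
    simp [hxi]
  have h3 := Finset.card_pos.2 ⟨i, h2⟩
  exact Nat.lt_irrefl 0 (Nat.lt_of_lt_of_le h3 h1)

private lemma phi_lower (m K : ℕ) (k : Fin m → ℕ) (I : Finset (Fin (m+1))) :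
    ((-(∑ i ∈ I, aa m K k i) : ℝ) : EReal)
      ≤ Phi (m+1) (m/2) 0 1 (fun j => -(aa m K k j)) I := by
  refine le_trans ?_ (le_iSup _ ⟨fun _ => false, by simp⟩)
  refine le_sInf ?_
  rintro v hv
  obtain ⟨T, hTI, -, rfl⟩ := mem_struct m K k I v hv
  exact EReal.coe_le_coe_iff.2 (neg_le_neg (Finset.sum_le_sum_of_subset_of_nonneg hTI
    (fun i _ _ => aa_nonneg m K k i)))

private lemma phi_upper (m K : ℕ) (k : Fin m → ℕ) (S : Finset (Fin m))
    (hScard : S.card = m / 2) (hSsum : ∑ s ∈ S, (k s : ℝ) = K) :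
    Phi (m+1) (m/2) 0 1 (fun j => -(aa m K k j)) (S.image Fin.castSucc)
      ≤ ((-(K : ℝ) : ℝ) : EReal) := by
  set I := S.image Fin.castSucc with hI
  have hinj : ∀ a ∈ S, ∀ b ∈ S, Fin.castSucc a = Fin.castSucc b → a = b :=
    fun a _ b _ h => Fin.castSucc_injective m h
  have hIcard : I.card = m / 2 := by
    rw [hI, Finset.card_image_of_injective _ (Fin.castSucc_injective m), hScard]
  have hIsum : ∑ i ∈ I, aa m K k i = K := by
    rw [hI, Finset.sum_image hinj]
    simp only [aa_cast]; exact hSsum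
  have hlast : Fin.last m ∉ I := by
    intro h
    obtain ⟨s, -, hs⟩ := Finset.mem_image.1 h
    exact absurd hs (Fin.castSucc_lt_last s).ne
  apply iSup_le
  rintro ⟨γ, hγ⟩
  by_cases hex : ∃ j ∈ I, γ j = true
  · obtain ⟨j, hjI, hγj⟩ := hex
    obtain ⟨s₀, hs₀S, rfl⟩ := Finset.mem_image.1 hjI
    have hks₀ : (k s₀ : ℝ) ≤ K :=
      hSsum ▸ Finset.single_le_sum (f := fun s => (k s : ℝ)) (fun i _ => by positivity) hs₀S
    set x : Fin (m+1) → Bool :=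
      fun i => decide ((i ∈ I ∧ i ≠ s₀.castSucc) ∨ i = Fin.last m) with hx
    have hxfil : univ.filter (fun i => x i = true) = insert (Fin.last m) (I.erase s₀.castSucc) := by
      ext i
      simp only [hx, mem_filter, mem_univ, true_and, decide_eq_true_eq, mem_insert, mem_erase]
      tauto
    have hpos : 0 < m / 2 := hIcard ▸ Finset.card_pos.2 ⟨_, hjI⟩
    have hcard : (univ.filter (fun i => x i = true)).card = m / 2 := by
      rw [hxfil, Finset.card_insert_of_notMem (fun h => hlast (Finset.mem_of_mem_erase h)),
        Finset.card_erase_of_mem hjI, hIcard]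
      omega
    have hfeas : ∀ δ : Fin (m+1) → Bool,
        (univ.filter (fun i => δ i = true)).card ≤ 1 →
        (∀ i ∈ I, δ i = γ i) →
        (univ.filter (fun i => δ i = true ∧ x i = true)).card ≤ 0 := by
      intro δ hδ hδI
      have hδj : δ s₀.castSucc = true := by rw [hδI _ hjI]; exact hγj
      rw [Nat.le_zero, Finset.card_eq_zero, Finset.eq_empty_iff_forall_notMem]
      intro i hi
      simp only [hx, mem_filter, mem_univ, true_and, decide_eq_true_eq] at hi
      obtain ⟨hδi, hxi⟩ := hi
      have heq : i = s₀.castSucc := singleton_of_card_le_one δ hδ hδi hδj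
      subst heq
      rcases hxi with ⟨-, hne⟩ | hlasteq
      · exact hne rfl
      · exact hlast (hlasteq ▸ hjI)
    have hsum_er : ∑ i ∈ I.erase s₀.castSucc, aa m K k i = K - k s₀ := by
      have h1 := Finset.add_sum_erase I (aa m K k) hjI
      rw [aa_cast] at h1
      linarith [hIsum]
    have hval : (∑ i ∈ univ.filter (fun i => x i = true), -(aa m K k i) : ℝ)
        = -(((K : ℝ) + 1) + ((K : ℝ) - k s₀)) := by
      rw [hxfil, Finset.sum_insert (fun h => hlast (Finset.mem_of_mem_erase h))]
      rw [aa_last, Finset.sum_neg_distrib, hsum_er]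
      ring
    refine le_trans (sInf_le ⟨x, hcard, hfeas, rfl⟩) ?_
    rw [hval]
    exact EReal.coe_le_coe_iff.2 (by linarith)
  · have hγI : ∀ j ∈ I, γ j = false := by
      intro j hj
      rcases Bool.eq_false_or_eq_true (γ j) with h | h
      · exact absurd ⟨j, hj, h⟩ hex
      · exact h
    set x : Fin (m+1) → Bool := fun i => decide (i ∈ I) with hx
    have hxfil : univ.filter (fun i => x i = true) = I := by simp [hx]
    have hcard : (univ.filter (fun i => x i = true)).card = m / 2 := by rw [hxfil, hIcard]
    have hfeas : ∀ δ : Fin (m+1) → Bool,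
        (univ.filter (fun i => δ i = true)).card ≤ 1 →
        (∀ i ∈ I, δ i = γ i) →
        (univ.filter (fun i => δ i = true ∧ x i = true)).card ≤ 0 := by
      intro δ hδ hδI
      rw [Nat.le_zero, Finset.card_eq_zero, Finset.eq_empty_iff_forall_notMem]
      intro i hi
      simp only [hx, mem_filter, mem_univ, true_and, decide_eq_true_eq] at hi
      obtain ⟨hδi, hiI⟩ := hi
      rw [hδI _ hiI, hγI _ hiI] at hδi
      exact Bool.false_ne_true hδi
    have hval : (∑ i ∈ univ.filter (fun i => x i = true), -(aa m K k i) : ℝ) = -(K : ℝ) := by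
      rw [hxfil, Finset.sum_neg_distrib, hIsum]
    refine le_trans (sInf_le ⟨x, hcard, hfeas, rfl⟩) ?_
    rw [hval]

private lemma sum_image_aa (m K : ℕ) (k : Fin m → ℕ) (S : Finset (Fin m)) :
    ∑ i ∈ S.image Fin.castSucc, aa m K k i = ∑ s ∈ S, (k s : ℝ) := by
  rw [Finset.sum_image (fun a _ b _ h => Fin.castSucc_injective m h)]
  simp only [aa_cast]

private lemma key (m K : ℕ) (k : Fin m → ℕ) (I : Finset (Fin (m+1)))
    (hIfeas : ∑ i ∈ I, aa m K k i ≤ (K : ℝ))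
    (hIval : Phi (m+1) (m/2) 0 1 (fun j => -(aa m K k j)) I = ((-(K : ℝ) : ℝ) : EReal)) :
    ∃ T : Finset (Fin (m+1)), T ⊆ I ∧ T.card = m / 2 ∧ ∑ i ∈ T, aa m K k i = (K : ℝ) := by
  classical
  set s0 : Set EReal := {v : EReal | ∃ x : Fin (m+1) → Bool,
      (univ.filter (fun i => x i = true)).card = m / 2 ∧
      (∀ δ : Fin (m+1) → Bool,
        (univ.filter (fun i => δ i = true)).card ≤ 1 →
        (∀ i ∈ I, δ i = false) →
        (univ.filter (fun i => δ i = true ∧ x i = true)).card ≤ 0) ∧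
      v = ((∑ i ∈ univ.filter (fun i => x i = true), -(aa m K k i) : ℝ) : EReal)} with hs0
  have h1 : sInf s0 ≤ ((-(K : ℝ) : ℝ) : EReal) := by
    rw [← hIval]
    exact le_iSup (fun γ : {γ : Fin (m+1) → Bool //
        (univ.filter (fun i => γ i = true)).card ≤ 1} =>
      sInf {v : EReal | ∃ x : Fin (m+1) → Bool,
        (univ.filter (fun i => x i = true)).card = m / 2 ∧
        (∀ δ : Fin (m+1) → Bool,
          (univ.filter (fun i => δ i = true)).card ≤ 1 →
          (∀ i ∈ I, δ i = γ.1 i) →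
          (univ.filter (fun i => δ i = true ∧ x i = true)).card ≤ 0) ∧
        v = ((∑ i ∈ univ.filter (fun i => x i = true), -(aa m K k i) : ℝ) : EReal)})
      ⟨fun _ => false, by simp⟩
  have hfin : s0.Finite := Set.Finite.subset (Set.finite_range (fun x : Fin (m+1) → Bool =>
      ((∑ i ∈ univ.filter (fun i => x i = true), -(aa m K k i) : ℝ) : EReal)))
    (by rintro v ⟨x, -, -, rfl⟩; exact ⟨x, rfl⟩)
  have hne : s0.Nonempty := by
    by_contra hempty
    rw [Set.not_nonempty_iff_eq_empty] at hempty
    rw [hempty, sInf_empty, top_le_iff] at h1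
    exact EReal.coe_ne_top _ h1
  have hmem := hne.csInf_mem hfin
  obtain ⟨T, hTI, hTcard, hTval⟩ := mem_struct m K k I _ hmem
  refine ⟨T, hTI, hTcard, ?_⟩
  have h2 : ∑ i ∈ T, aa m K k i ≤ ∑ i ∈ I, aa m K k i :=
    Finset.sum_le_sum_of_subset_of_nonneg hTI (fun i _ _ => aa_nonneg m K k i)
  rw [hTval] at h1
  have h3 := EReal.coe_le_coe_iff.1 h1
  linarith

theorem stmt19 (m K : ℕ) (k : Fin m → ℕ) (hk : ∀ i, 1 ≤ k i)
    (hsum : ∑ i, k i = 2 * K) :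
    (sInf {v : EReal | ∃ I : Finset (Fin (m + 1)),
        (∑ i ∈ I, (fun j : Fin (m + 1) =>
            if h : (j : ℕ) < m then (k ⟨j, h⟩ : ℝ) else (K + 1 : ℝ)) i) ≤ (K : ℝ) ∧
        v = Phi (m + 1) (m / 2) 0 1
              (fun j : Fin (m + 1) =>
                if h : (j : ℕ) < m then -(k ⟨j, h⟩ : ℝ) else -(K + 1 : ℝ)) I}
      = ((-(K : ℝ) : ℝ) : EReal))
    ↔ ∃ S : Finset (Fin m), S.card = m / 2 ∧ ∑ i ∈ S, k i = K := by
  classical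
  simp only [cc_eq m K k]
  constructor
  · intro h
    have hOfin : ({v : EReal | ∃ I : Finset (Fin (m + 1)),
        (∑ i ∈ I, (fun j : Fin (m + 1) =>
            if h : (j : ℕ) < m then (k ⟨j, h⟩ : ℝ) else (K + 1 : ℝ)) i) ≤ (K : ℝ) ∧
        v = Phi (m + 1) (m / 2) 0 1 (fun j => -(aa m K k j)) I}).Finite :=
      Set.Finite.subset (Set.finite_range (Phi (m + 1) (m / 2) 0 1 (fun j => -(aa m K k j))))
        (by rintro v ⟨I, -, rfl⟩; exact ⟨I, rfl⟩)
    have hOne : ({v : EReal | ∃ I : Finset (Fin (m + 1)),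
        (∑ i ∈ I, (fun j : Fin (m + 1) =>
            if h : (j : ℕ) < m then (k ⟨j, h⟩ : ℝ) else (K + 1 : ℝ)) i) ≤ (K : ℝ) ∧
        v = Phi (m + 1) (m / 2) 0 1 (fun j => -(aa m K k j)) I}).Nonempty :=
      ⟨_, ∅, by simp, rfl⟩
    have hmem := hOne.csInf_mem hOfin
    rw [h] at hmem
    obtain ⟨I, hIfeas, hIval⟩ := hmem
    have hIfeas' : ∑ i ∈ I, aa m K k i ≤ (K : ℝ) := hIfeas
    obtain ⟨T, hTI, hTcard, hTsum⟩ := key m K k I hIfeas' hIval.symm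
    have hlt : ∀ i ∈ T, (i : ℕ) < m := by
      intro i hi
      by_contra hge
      have heq : aa m K k i = (K : ℝ) + 1 := by unfold aa; rw [dif_neg hge]
      have hle : aa m K k i ≤ ∑ i ∈ T, aa m K k i :=
        Finset.single_le_sum (fun i _ => aa_nonneg m K k i) hi
      rw [hTsum, heq] at hle
      linarith
    set S : Finset (Fin m) := univ.filter (fun s => s.castSucc ∈ T) with hS
    have hTS : T = S.image Fin.castSucc := by
      ext i
      simp only [hS, Finset.mem_image, mem_filter, mem_univ, true_and]
      constructor
      · intro hi
        refine ⟨⟨(i : ℕ), hlt i hi⟩, ?_, ?_⟩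
        · have : Fin.castSucc (⟨(i : ℕ), hlt i hi⟩ : Fin m) = i := Fin.ext rfl
          rw [this]; exact hi
        · exact Fin.ext rfl
      · rintro ⟨s, hs, rfl⟩; exact hs
    refine ⟨S, ?_, ?_⟩
    · rw [← hTcard, hTS, Finset.card_image_of_injective _ (Fin.castSucc_injective m)]
    · have := sum_image_aa m K k S
      rw [← hTS, hTsum] at this
      exact_mod_cast this.symm
  · rintro ⟨S, hScard, hSsum⟩
    have hSsumR : ∑ s ∈ S, (k s : ℝ) = (K : ℝ) := by exact_mod_cast hSsum
    apply le_antisymm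
    · refine le_trans (sInf_le ⟨S.image Fin.castSucc, ?_, rfl⟩) ?_
      · show ∑ i ∈ S.image Fin.castSucc, aa m K k i ≤ (K : ℝ)
        rw [sum_image_aa m K k S, hSsumR]
      · exact phi_upper m K k S hScard hSsumR
    · refine le_sInf ?_
      rintro v ⟨I, hIfeas, rfl⟩
      have hIfeas' : ∑ i ∈ I, aa m K k i ≤ (K : ℝ) := hIfeas
      refine le_trans ?_ (phi_lower m K k I)
      exact EReal.coe_le_coe_iff.2 (by linarith)
end
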